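/- arXiv:2404.02262 — 6 statements merged into one kernel-verified Lean document; each statement's English description precedes it below -/
import Mathlib

section
/- Suppose sup_{x ∈ ℝ^d} (1/n)∑_{i=1}^n |h_i(x) − h(x)| → 0 as n → ∞ for a measurable h : ℝ^d → [0,1]. Then for every classification rule {g_n}, the average error probability satisfies liminf_{n→∞} T_n ≥ L*, where L* = ∫ min(h(x), 1−h(x)) μ(dx) is the Bayes error. -/
open MeasureTheory ProbabilityTheory Filter Set

lemma pred_lower_bound {Ω E : Type*} [MeasurableSpace Ω] [MeasurableSpace E]
    (P : Measure Ω) [IsProbabilityMeasure P] (μ : Measure E) [IsProbabilityMeasure μ]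
    (X : Ω → E) (Y : Ω → ℝ) (hXm : Measurable X) (hYm : Measurable Y)
    (hY01 : ∀ ω, Y ω = 0 ∨ Y ω = 1) (hXlaw : P.map X = μ)
    (η : E → ℝ) (hηm : Measurable η) (hηr : ∀ x, η x ∈ Set.Icc (0:ℝ) 1)
    (hjoint : ∀ A, MeasurableSet A →
      P ({ω | Y ω = 1} ∩ X ⁻¹' A) = ∫⁻ x in A, ENNReal.ofReal (η x) ∂μ)
    (f : E → ℝ) (hf : Measurable f) (hf01 : ∀ x, f x = 0 ∨ f x = 1) :
    ∫⁻ x, ENNReal.ofReal (min (η x) (1 - η x)) ∂μ ≤ P {ω | Y ω ≠ f (X ω)} := by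
  set A : Set E := f ⁻¹' {1} with hA
  have hAm : MeasurableSet A := hf (measurableSet_singleton 1)
  have hY1m : MeasurableSet {ω | Y ω = 1} := hYm (measurableSet_singleton 1)
  have hAc : Aᶜ = f ⁻¹' {0} := by
    ext x
    rcases hf01 x with h0 | h0 <;> simp [hA, h0]
  have hsplit : {ω | Y ω ≠ f (X ω)} =
      ({ω | Y ω = 1} ∩ X ⁻¹' Aᶜ) ∪ ({ω | Y ω = 1}ᶜ ∩ X ⁻¹' A) := by
    ext ω
    rcases hY01 ω with hy | hy <;> rcases hf01 (X ω) with hx | hx <;>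
      simp [hA, hAc, hy, hx]
  have hdisj : Disjoint ({ω | Y ω = 1} ∩ X ⁻¹' Aᶜ) ({ω | Y ω = 1}ᶜ ∩ X ⁻¹' A) :=
    disjoint_compl_right.mono inter_subset_left inter_subset_left
  have hm2 : MeasurableSet ({ω | Y ω = 1}ᶜ ∩ X ⁻¹' A) := hY1m.compl.inter (hXm hAm)
  have hPXA : P (X ⁻¹' A) = μ A := by
    rw [← hXlaw, Measure.map_apply hXm hAm]
  have hS2 : P ({ω | Y ω = 1}ᶜ ∩ X ⁻¹' A)
      = μ A - ∫⁻ x in A, ENNReal.ofReal (η x) ∂μ := by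
    have heq : {ω | Y ω = 1}ᶜ ∩ X ⁻¹' A = X ⁻¹' A \ ({ω | Y ω = 1} ∩ X ⁻¹' A) := by
      ext ω; simp [Set.mem_diff]; tauto
    rw [heq, measure_diff inter_subset_right (hY1m.inter (hXm hAm)).nullMeasurableSet
      (measure_ne_top P _), hjoint A hAm, hPXA]
  have hbound : ∀ x, ENNReal.ofReal (η x) ≤ 1 := fun x =>
    ENNReal.ofReal_le_one.2 (hηr x).2
  have hfin : ∫⁻ x in A, ENNReal.ofReal (η x) ∂μ ≠ ⊤ := by
    refine ne_top_of_le_ne_top (measure_ne_top μ A) ?_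
    calc ∫⁻ x in A, ENNReal.ofReal (η x) ∂μ ≤ ∫⁻ _ in A, 1 ∂μ :=
          lintegral_mono fun x => hbound x
      _ = μ A := setLIntegral_one A
  have hS2' : μ A - ∫⁻ x in A, ENNReal.ofReal (η x) ∂μ
      = ∫⁻ x in A, ENNReal.ofReal (1 - η x) ∂μ := by
    rw [← setLIntegral_one A, ← lintegral_sub hηm.ennreal_ofReal hfin
      (ae_of_all _ fun x => hbound x)]
    refine lintegral_congr fun x => ?_
    rw [ENNReal.ofReal_sub _ (hηr x).1, ENNReal.ofReal_one]
  rw [hsplit, measure_union hdisj hm2, hjoint Aᶜ hAm.compl, hS2, hS2',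
    ← lintegral_add_compl (fun x => ENNReal.ofReal (min (η x) (1 - η x))) hAm]
  rw [add_comm]
  exact add_le_add (lintegral_mono fun x => ENNReal.ofReal_le_ofReal (min_le_left _ _))
    (lintegral_mono fun x => ENNReal.ofReal_le_ofReal (min_le_right _ _))

/-- Data: `X_i` i.i.d. with law `μ` on `ℝ^d`, `Y_i ∈ {0,1}` with
`P(Y_i = 1, X_i ∈ A) = ∫_A h_i dμ`, the pairs `(X_i, Y_i)` mutually independent.  If
`sup_x (1/n) ∑_{i=1}^n |h_i(x) - h(x)| → 0` then every classification rule `{g_n}` has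
average error probability `T_n` satisfying `liminf T_n ≥ L* = ∫ min(h, 1-h) dμ`. -/
theorem bayes_error_liminf_lower_bound
    {Ω : Type*} [MeasurableSpace Ω] (P : Measure Ω) [IsProbabilityMeasure P]
    (d : ℕ) (μ : Measure (EuclideanSpace ℝ (Fin d))) [IsProbabilityMeasure μ]
    (X : ℕ → Ω → EuclideanSpace ℝ (Fin d)) (Y : ℕ → Ω → ℝ)
    (hXmeas : ∀ i, Measurable (X i)) (hYmeas : ∀ i, Measurable (Y i))
    (hY01 : ∀ i ω, Y i ω = 0 ∨ Y i ω = 1)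
    (hXlaw : ∀ i, P.map (X i) = μ)
    (hindep : iIndepFun (fun i ω => (X i ω, Y i ω)) P)
    (η : ℕ → EuclideanSpace ℝ (Fin d) → ℝ)
    (hηmeas : ∀ i, Measurable (η i)) (hηrange : ∀ i x, η i x ∈ Set.Icc (0 : ℝ) 1)
    (hjoint : ∀ i A, MeasurableSet A →
      P ({ω | Y i ω = 1} ∩ (X i) ⁻¹' A) = ∫⁻ x in A, ENNReal.ofReal (η i x) ∂μ)
    (h : EuclideanSpace ℝ (Fin d) → ℝ)
    (hmeas : Measurable h) (hrange : ∀ x, h x ∈ Set.Icc (0 : ℝ) 1)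
    (hconv : TendstoUniformly
      (fun (n : ℕ) x => (1 / (n : ℝ)) * ∑ i ∈ Finset.range n, |η i x - h x|) 0 atTop)
    -- an arbitrary classification rule
    (g : (n : ℕ) → (Fin n → EuclideanSpace ℝ (Fin d) × ℝ) → EuclideanSpace ℝ (Fin d) → ℝ)
    (hgmeas : ∀ n, Measurable (Function.uncurry (g n)))
    (hg01 : ∀ n v x, g n v x = 0 ∨ g n v x = 1) :
    (∫ x, min (h x) (1 - h x) ∂μ) ≤
      liminf (fun n : ℕ => (1 / (n : ℝ)) *
        ∑ i ∈ Finset.range n,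
          (P {ω | Y i ω ≠ g i (fun j : Fin i => (X j ω, Y j ω)) (X i ω)}).toReal)
        atTop := by
    classical
  -- integrability helpers
  have hint2 : ∀ (f : EuclideanSpace ℝ (Fin d) → ℝ), Measurable f → (∀ x, |f x| ≤ 2) →
      Integrable f μ := fun f hfm hb =>
    (integrable_const (2:ℝ)).mono' hfm.aestronglyMeasurable
      (ae_of_all _ fun x => by simpa [Real.norm_eq_abs] using hb x)
  have hmin_nonneg : ∀ (q : EuclideanSpace ℝ (Fin d) → ℝ), (∀ x, q x ∈ Set.Icc (0:ℝ) 1) →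
      ∀ x, 0 ≤ min (q x) (1 - q x) := by
    intro q hq x
    obtain ⟨h0, h1⟩ := hq x
    exact le_min h0 (by linarith)
  have hint_min : ∀ (q : EuclideanSpace ℝ (Fin d) → ℝ), Measurable q →
      (∀ x, q x ∈ Set.Icc (0:ℝ) 1) → Integrable (fun x => min (q x) (1 - q x)) μ := by
    intro q hqm hq
    refine hint2 _ (hqm.min (measurable_const.sub hqm)) fun x => ?_
    obtain ⟨h0, h1⟩ := hq x
    rw [abs_le]
    exact ⟨by have := hmin_nonneg q hq x; linarith,
      le_trans (min_le_left _ _) (by linarith)⟩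
  have hint_abs : ∀ i, Integrable (fun x => |η i x - h x|) μ := by
    intro i
    refine hint2 _ ((hηmeas i).sub hmeas).abs fun x => ?_
    obtain ⟨h0, h1⟩ := hηrange i x
    obtain ⟨h2, h3⟩ := hrange x
    rw [abs_abs, abs_le]
    constructor <;> linarith
  have hint_minh : Integrable (fun x => min (h x) (1 - h x)) μ := hint_min h hmeas hrange
  set L : ℝ := ∫ x, min (h x) (1 - h x) ∂μ with hL
  set D : ℕ → ℝ := fun i => ∫ x, |η i x - h x| ∂μ with hD
  set T : ℕ → ℝ := fun n : ℕ => (1 / (n : ℝ)) *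
      ∑ i ∈ Finset.range n,
        (P {ω | Y i ω ≠ g i (fun j : Fin i => (X j ω, Y j ω)) (X i ω)}).toReal with hTdef
  -- key step : per-round lower bound
  have key : ∀ i : ℕ, L - D i ≤
      (P {ω | Y i ω ≠ g i (fun j : Fin i => (X j ω, Y j ω)) (X i ω)}).toReal := by
    intro i
    set Li : ℝ := ∫ x, min (η i x) (1 - η i x) ∂μ with hLi
    have hLi_nonneg : 0 ≤ Li :=
      integral_nonneg (hmin_nonneg (η i) (hηrange i))
    have stepA : ∀ (f : EuclideanSpace ℝ (Fin d) → ℝ), Measurable f →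
        (∀ x, f x = 0 ∨ f x = 1) →
        ENNReal.ofReal Li ≤ P {ω | Y i ω ≠ f (X i ω)} := by
      intro f hfm hf01
      have hPB := pred_lower_bound P μ (X i) (Y i) (hXmeas i) (hYmeas i) (hY01 i) (hXlaw i)
        (η i) (hηmeas i) (hηrange i) (hjoint i) f hfm hf01
      refine le_trans (le_of_eq ?_) hPB
      rw [hLi, ofReal_integral_eq_lintegral_ofReal (hint_min (η i) (hηmeas i) (hηrange i))
        (ae_of_all _ (hmin_nonneg (η i) (hηrange i)))]
    have hZ : ∀ j : ℕ, Measurable fun ω => (X j ω, Y j ω) := fun j =>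
      (hXmeas j).prodMk (hYmeas j)
    set V : Ω → (Fin i → EuclideanSpace ℝ (Fin d) × ℝ) :=
      fun ω j => (X j ω, Y j ω) with hV
    set W : Ω → EuclideanSpace ℝ (Fin d) × ℝ := fun ω => (X i ω, Y i ω) with hW
    have hVm : Measurable V := measurable_pi_lambda _ fun j => hZ j
    have hWm : Measurable W := hZ i
    have hIndep : IndepFun V W P := by
      have h0 := hindep.indepFun_finset (Finset.range i) {i} (by simp) hZ
      have hφ : Measurable fun (u : ↥(Finset.range i) →
            EuclideanSpace ℝ (Fin d) × ℝ) (j : Fin i) =>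
          u ⟨(j : ℕ), Finset.mem_range.2 j.2⟩ :=
        measurable_pi_lambda _ fun j => measurable_pi_apply _
      have hψ : Measurable fun (u : ↥({i} : Finset ℕ) → EuclideanSpace ℝ (Fin d) × ℝ) =>
          u ⟨i, Finset.mem_singleton_self i⟩ := measurable_pi_apply _
      exact h0.comp hφ hψ
    have hmapeq := (indepFun_iff_map_prod_eq_prod_map_map hVm.aemeasurable
      hWm.aemeasurable).1 hIndep
    set s : Set ((Fin i → EuclideanSpace ℝ (Fin d) × ℝ) ×
        (EuclideanSpace ℝ (Fin d) × ℝ)) := {p | p.2.2 ≠ g i p.1 p.2.1} with hs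
    have hgm : Measurable fun p : (Fin i → EuclideanSpace ℝ (Fin d) × ℝ) ×
        (EuclideanSpace ℝ (Fin d) × ℝ) => g i p.1 p.2.1 :=
      (hgmeas i).comp (measurable_fst.prodMk (measurable_fst.comp measurable_snd))
    have hsm : MeasurableSet s :=
      (measurableSet_eq_fun (measurable_snd.comp measurable_snd) hgm).compl
    have hPs : P {ω | Y i ω ≠ g i (fun j : Fin i => (X j ω, Y j ω)) (X i ω)}
        = ((P.map V).prod (P.map W)) s := by
      rw [← hmapeq, Measure.map_apply (hVm.prodMk hWm) hsm]
      rfl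
    have hprobV : IsProbabilityMeasure (P.map V) := Measure.isProbabilityMeasure_map hVm.aemeasurable
    have hLB : ENNReal.ofReal Li ≤
        P {ω | Y i ω ≠ g i (fun j : Fin i => (X j ω, Y j ω)) (X i ω)} := by
      rw [hPs, Measure.prod_apply hsm]
      calc ENNReal.ofReal Li = ∫⁻ _, ENNReal.ofReal Li ∂(P.map V) := by
            simp [lintegral_const, measure_univ]
        _ ≤ ∫⁻ v, (P.map W) (Prod.mk v ⁻¹' s) ∂(P.map V) := by
            refine lintegral_mono fun v => ?_
            rw [Measure.map_apply hWm (measurable_prodMk_left hsm)]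
            exact stepA (fun x => g i v x)
              ((hgmeas i).comp measurable_prodMk_left) (hg01 i v)
    have h1 : Li ≤
        (P {ω | Y i ω ≠ g i (fun j : Fin i => (X j ω, Y j ω)) (X i ω)}).toReal := by
      have := ENNReal.toReal_mono (measure_ne_top P _) hLB
      rwa [ENNReal.toReal_ofReal hLi_nonneg] at this
    have h2 : L - D i ≤ Li := by
      rw [hL, hD, hLi, ← integral_sub hint_minh (hint_abs i)]
      refine integral_mono (hint_minh.sub (hint_abs i))
        (hint_min (η i) (hηmeas i) (hηrange i)) fun x => ?_
      have hmm := abs_min_sub_min_le_max (h x) (1 - h x) (η i x) (1 - η i x)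
      have e1 : |(1 - h x) - (1 - η i x)| = |h x - η i x| := by
        rw [show (1 - h x) - (1 - η i x) = -(h x - η i x) by ring, abs_neg]
      rw [e1, max_self] at hmm
      have h3 := (abs_le.1 hmm).2
      have h4 : |η i x - h x| = |h x - η i x| := abs_sub_comm _ _
      simp only [Pi.sub_apply]
      linarith
    linarith
  -- upper bound on T, for coboundedness
  have hterm_le : ∀ i : ℕ,
      (P {ω | Y i ω ≠ g i (fun j : Fin i => (X j ω, Y j ω)) (X i ω)}).toReal ≤ 1 := by
    intro i
    calc (P _).toReal ≤ (1 : ENNReal).toReal :=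
          ENNReal.toReal_mono ENNReal.one_ne_top prob_le_one
      _ = 1 := by simp
  have hTub : ∀ n, T n ≤ 1 := by
    intro n
    rcases Nat.eq_zero_or_pos n with h0 | hpos
    · simp [hTdef, h0]
    · have hsum : ∑ i ∈ Finset.range n,
          (P {ω | Y i ω ≠ g i (fun j : Fin i => (X j ω, Y j ω)) (X i ω)}).toReal
          ≤ (n : ℝ) := by
        calc _ ≤ ∑ _i ∈ Finset.range n, (1:ℝ) :=
              Finset.sum_le_sum fun i _ => hterm_le i
          _ = (n : ℝ) := by simp
      have hn0 : (0:ℝ) < (n:ℝ) := by exact_mod_cast hpos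
      have := mul_le_mul_of_nonneg_left hsum (by positivity : (0:ℝ) ≤ 1 / (n:ℝ))
      calc T n ≤ (1 / (n:ℝ)) * (n : ℝ) := this
        _ = 1 := by field_simp
  have hcb : IsCoboundedUnder (· ≥ ·) atTop T := isCoboundedUnder_ge_of_le atTop hTub
  refine le_of_forall_sub_le fun ε hε => ?_
  refine le_liminf_of_le hcb ?_
  have hev1 := (Metric.tendstoUniformly_iff.1 hconv) ε hε
  filter_upwards [hev1, eventually_ge_atTop 1] with n hn hn1
  have hn0 : (0:ℝ) < (n:ℝ) := by exact_mod_cast hn1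
  have hne : (n:ℝ) ≠ 0 := ne_of_gt hn0
  -- average of D's is at most ε
  have hDn : (1/(n:ℝ)) * ∑ i ∈ Finset.range n, D i ≤ ε := by
    have hFint : Integrable (fun x => (1/(n:ℝ)) *
        ∑ i ∈ Finset.range n, |η i x - h x|) μ :=
      (integrable_finset_sum (Finset.range n) fun i _ => hint_abs i).const_mul _
    have heq : (1/(n:ℝ)) * ∑ i ∈ Finset.range n, D i
        = ∫ x, (1/(n:ℝ)) * ∑ i ∈ Finset.range n, |η i x - h x| ∂μ := by
      rw [integral_const_mul, integral_finset_sum (Finset.range n) fun i _ => hint_abs i]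
    rw [heq]
    have hpt : ∀ x, (1/(n:ℝ)) * ∑ i ∈ Finset.range n, |η i x - h x| ≤ ε := by
      intro x
      have hx := hn x
      simp only [Pi.zero_apply, Real.dist_eq, zero_sub, abs_neg] at hx
      exact le_of_lt (lt_of_le_of_lt (le_abs_self _) hx)
    calc ∫ x, (1/(n:ℝ)) * ∑ i ∈ Finset.range n, |η i x - h x| ∂μ
        ≤ ∫ _, ε ∂μ := integral_mono hFint (integrable_const ε) hpt
      _ = ε := by simp [measure_univ]
  -- per-round bound summed
  have hTlb : L - (1/(n:ℝ)) * ∑ i ∈ Finset.range n, D i ≤ T n := by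
    have hs := Finset.sum_le_sum fun i (_ : i ∈ Finset.range n) => key i
    have hmul := mul_le_mul_of_nonneg_left hs (by positivity : (0:ℝ) ≤ 1 / (n:ℝ))
    rw [Finset.sum_sub_distrib, Finset.sum_const, Finset.card_range, nsmul_eq_mul] at hmul
    have hrw : (1/(n:ℝ)) * ((n:ℝ) * L - ∑ i ∈ Finset.range n, D i)
        = L - (1/(n:ℝ)) * ∑ i ∈ Finset.range n, D i := by
      field_simp
    rw [hrw] at hmul
    exact hmul
  linarith [hDn, hTlb]
end

section
/- Let (a_n) and (b_n) be bounded sequences of real numbers such that a_n → a and (1/n)∑_{i=1}^n b_i → b as n → ∞. Then (1/n)∑_{i=1}^n a_i b_i → a·b as n → ∞. -/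
open Filter

/-- If `(a_n)` and `(b_n)` are bounded real sequences (indexed by the
positive integers) with `a_n → a` and `(1/n) ∑_{i=1}^n b_i → b`, then
`(1/n) ∑_{i=1}^n a_i b_i → a * b`. -/
theorem cesaro_product_of_tendsto_of_cesaro
    (a b : ℕ → ℝ) (A B : ℝ)
    (ha_bdd : ∃ M : ℝ, ∀ n, |a n| ≤ M)
    (hb_bdd : ∃ M : ℝ, ∀ n, |b n| ≤ M)
    (ha : Tendsto a atTop (nhds A))
    (hb : Tendsto (fun n : ℕ => (1 / (n : ℝ)) * ∑ i ∈ Finset.Icc 1 n, b i)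
      atTop (nhds B)) :
    Tendsto (fun n : ℕ => (1 / (n : ℝ)) * ∑ i ∈ Finset.Icc 1 n, a i * b i)
      atTop (nhds (A * B)) := by
  obtain ⟨M, hM⟩ := hb_bdd
  have hM0 : 0 ≤ M := le_trans (abs_nonneg _) (hM 0)
  have hc : Tendsto (fun n : ℕ => |a (1 + n) - A|) atTop (nhds 0) := by
    have h2 : Tendsto (fun n => a n - A) atTop (nhds 0) := by
      simpa using ha.sub (tendsto_const_nhds (x := A))
    have h3 : Tendsto (fun n => |a n - A|) atTop (nhds 0) := by
      simpa using h2.abs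
    exact h3.comp (tendsto_add_atTop_nat 1 |>.comp (tendsto_id)) |>.congr
      (fun n => by simp [Nat.add_comm])
  have hces := hc.cesaro
  have key : ∀ n : ℕ, (1/(n:ℝ)) * ∑ i ∈ Finset.Icc 1 n, a i * b i
      = A * ((1/(n:ℝ)) * ∑ i ∈ Finset.Icc 1 n, b i)
        + (1/(n:ℝ)) * ∑ i ∈ Finset.Icc 1 n, (a i - A) * b i := by
    intro n
    have : ∑ i ∈ Finset.Icc 1 n, (a i - A) * b i
        = ∑ i ∈ Finset.Icc 1 n, a i * b i - A * ∑ i ∈ Finset.Icc 1 n, b i := by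
      rw [Finset.mul_sum, ← Finset.sum_sub_distrib]
      congr 1; ext i; ring
    rw [this]; ring
  have h0 : Tendsto (fun n : ℕ => (1/(n:ℝ)) * ∑ i ∈ Finset.Icc 1 n, (a i - A) * b i)
      atTop (nhds 0) := by
    have hten : Tendsto (fun n : ℕ => M * ((n:ℝ)⁻¹ * ∑ i ∈ Finset.range n, |a (1 + i) - A|))
        atTop (nhds 0) := by
      have := hces.const_mul M
      simpa using this
    refine squeeze_zero_norm ?_ hten
    · intro n
      have hsum : ∑ i ∈ Finset.Icc 1 n, |a i - A| = ∑ i ∈ Finset.range n, |a (1 + i) - A| := by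
        rw [← Finset.Ico_add_one_right_eq_Icc, Finset.sum_Ico_eq_sum_range]; simp
      have hb1 : |∑ i ∈ Finset.Icc 1 n, (a i - A) * b i|
          ≤ ∑ i ∈ Finset.Icc 1 n, |a i - A| * M := by
        refine le_trans (Finset.abs_sum_le_sum_abs _ _) ?_
        refine Finset.sum_le_sum fun i _ => ?_
        rw [abs_mul]
        exact mul_le_mul_of_nonneg_left (hM i) (abs_nonneg _)
      have hn : (0:ℝ) ≤ 1/(n:ℝ) := by positivity
      calc ‖(1/(n:ℝ)) * ∑ i ∈ Finset.Icc 1 n, (a i - A) * b i‖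
          = (1/(n:ℝ)) * |∑ i ∈ Finset.Icc 1 n, (a i - A) * b i| := by
            rw [Real.norm_eq_abs, abs_mul, abs_of_nonneg hn]
        _ ≤ (1/(n:ℝ)) * ∑ i ∈ Finset.Icc 1 n, |a i - A| * M :=
            mul_le_mul_of_nonneg_left hb1 hn
        _ = M * ((n:ℝ)⁻¹ * ∑ i ∈ Finset.range n, |a (1 + i) - A|) := by
            rw [← Finset.sum_mul, hsum]; ring
  have h1 : Tendsto (fun n : ℕ => A * ((1/(n:ℝ)) * ∑ i ∈ Finset.Icc 1 n, b i))
      atTop (nhds (A * B)) := hb.const_mul A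
  have := h1.add h0
  rw [add_zero] at this
  exact this.congr (fun n => (key n).symm)
end

section
/- Let f_i : ℝ^d → [0,∞), i ≥ 1, be integrable functions, let f : ℝ^d → [0,∞) be uniformly continuous and bounded, and let h : ℝ^d → ℝ be uniformly continuous and bounded. Suppose sup_{x ∈ ℝ^d} |(1/n)∑_{i=1}^n f_i(x) − f(x)| → 0 as n → ∞, and let r_n : ℝ^d → (0,∞) satisfy sup_x r_n(x) → 0 as n → ∞. Then sup_{x ∈ ℝ^d} | (1/(n·λ(B(x,r_n(x))))) ∑_{i=1}^n ∫_{B(x,r_n(x))} h·f_i dλ − h(x)·f(x) | → 0 as n → ∞. -/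
open MeasureTheory Filter Metric

lemma prod_uc_aux {α : Type*} [PseudoMetricSpace α] (h g : α → ℝ)
    (hh : UniformContinuous h) (hg : UniformContinuous g) (Mh Mg : ℝ)
    (hMh : ∀ x, |h x| ≤ Mh) (hMg : ∀ x, |g x| ≤ Mg) (ε : ℝ) (hε : 0 < ε) :
    ∃ δ > 0, ∀ x y : α, dist x y < δ → |h y * g y - h x * g x| ≤ ε := by
  set Mh' := max Mh 0 with hMh'
  set Mg' := max Mg 0 with hMg'
  have hMh0 : 0 ≤ Mh' := le_max_right _ _
  have hMg0 : 0 ≤ Mg' := le_max_right _ _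
  have hεg : 0 < ε / (2 * (Mh' + 1)) := by positivity
  have hεh : 0 < ε / (2 * (Mg' + 1)) := by positivity
  obtain ⟨δ1, hδ1, H1⟩ := Metric.uniformContinuous_iff.1 hg _ hεg
  obtain ⟨δ2, hδ2, H2⟩ := Metric.uniformContinuous_iff.1 hh _ hεh
  refine ⟨min δ1 δ2, lt_min hδ1 hδ2, fun x y hxy => ?_⟩
  have e1 : |g y - g x| < ε / (2 * (Mh' + 1)) := by
    have := H1 (lt_of_lt_of_le hxy (min_le_left _ _))
    rwa [Real.dist_eq, abs_sub_comm] at this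
  have e2 : |h y - h x| < ε / (2 * (Mg' + 1)) := by
    have := H2 (lt_of_lt_of_le hxy (min_le_right _ _))
    rwa [Real.dist_eq, abs_sub_comm] at this
  have key : |h y * g y - h x * g x| ≤ Mh' * |g y - g x| + Mg' * |h y - h x| := by
    have heq : h y * g y - h x * g x = h y * (g y - g x) + g x * (h y - h x) := by ring
    rw [heq]
    calc |h y * (g y - g x) + g x * (h y - h x)|
        ≤ |h y * (g y - g x)| + |g x * (h y - h x)| := abs_add_le _ _
      _ = |h y| * |g y - g x| + |g x| * |h y - h x| := by rw [abs_mul, abs_mul]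
      _ ≤ Mh' * |g y - g x| + Mg' * |h y - h x| := by
          gcongr
          · exact le_max_of_le_left (hMh y)
          · exact le_max_of_le_left (hMg x)
  have c1 : (Mh' + 1) * (ε / (2 * (Mh' + 1))) = ε / 2 := by field_simp
  have c2 : (Mg' + 1) * (ε / (2 * (Mg' + 1))) = ε / 2 := by field_simp
  have b1 : Mh' * |g y - g x| ≤ ε / 2 := by
    calc Mh' * |g y - g x| ≤ (Mh' + 1) * (ε / (2 * (Mh' + 1))) :=
          mul_le_mul (by linarith) e1.le (abs_nonneg _) (by linarith)
      _ = ε / 2 := c1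
  have b2 : Mg' * |h y - h x| ≤ ε / 2 := by
    calc Mg' * |h y - h x| ≤ (Mg' + 1) * (ε / (2 * (Mg' + 1))) :=
          mul_le_mul (by linarith) e2.le (abs_nonneg _) (by linarith)
      _ = ε / 2 := c2
  linarith

/-- If the integrable nonnegative functions `f_i` have Cesàro averages
converging uniformly to a uniformly continuous bounded `f`, `h` is uniformly continuous and
bounded, and `r_n(x) > 0` with `sup_x r_n(x) → 0`, then
`(1/(n λ(B(x, r_n(x))))) ∑_{i=1}^n ∫_{B(x,r_n(x))} h f_i dλ → h(x) f(x)` uniformly in `x`. -/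
theorem ball_average_mul_tendsto_uniformly
    (d : ℕ) (f : ℕ → EuclideanSpace ℝ (Fin d) → ℝ)
    (g : EuclideanSpace ℝ (Fin d) → ℝ) (h : EuclideanSpace ℝ (Fin d) → ℝ)
    (hf_nonneg : ∀ i x, 0 ≤ f i x)
    (hf_int : ∀ i, Integrable (f i) volume)
    (hg_nonneg : ∀ x, 0 ≤ g x)
    (hg : UniformContinuous g)
    (hg_bdd : ∃ M : ℝ, ∀ x, |g x| ≤ M)
    (hh : UniformContinuous h)
    (hh_bdd : ∃ M : ℝ, ∀ x, |h x| ≤ M)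
    (hconv : TendstoUniformly
      (fun (n : ℕ) x => (1 / (n : ℝ)) * ∑ i ∈ Finset.range n, f i x) g atTop)
    (r : ℕ → EuclideanSpace ℝ (Fin d) → ℝ)
    (hr_pos : ∀ n x, 0 < r n x)
    (hr : TendstoUniformly (fun (n : ℕ) x => r n x) 0 atTop) :
    TendstoUniformly
      (fun (n : ℕ) x =>
        (1 / ((n : ℝ) * (volume (ball x (r n x))).toReal)) *
          ∑ i ∈ Finset.range n, ∫ y in ball x (r n x), h y * f i y)
      (fun x => h x * g x) atTop := by
  obtain ⟨Mg, hMg⟩ := hg_bdd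
  obtain ⟨Mh, hMh⟩ := hh_bdd
  have hMh0 : 0 ≤ Mh := le_trans (abs_nonneg _) (hMh 0)
  rw [Metric.tendstoUniformly_iff] at hconv hr ⊢
  intro ε hε
  -- modulus for the product h*g at scale ε/4
  obtain ⟨δ, hδ, Hδ⟩ := prod_uc_aux h g hh hg Mh Mg hMh hMg (ε / 4) (by linarith)
  -- ε1 : scale for uniform convergence of averages
  set ε1 : ℝ := ε / (4 * (Mh + 1)) with hε1def
  have hε1 : 0 < ε1 := by positivity
  have hMhε1 : Mh * ε1 ≤ ε / 4 := by
    have : Mh * ε1 ≤ (Mh + 1) * ε1 := by nlinarith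
    have c : (Mh + 1) * ε1 = ε / 4 := by
      rw [hε1def]; field_simp
    linarith
  filter_upwards [hconv ε1 hε1, hr δ hδ] with n hn hrn x
  -- notation
  set B := ball x (r n x) with hB
  set V := (volume B).toReal with hV
  have hVpos : 0 < V := by
    rw [hV]
    refine ENNReal.toReal_pos (ne_of_gt (measure_ball_pos volume x (hr_pos n x))) ?_
    exact (measure_ball_lt_top).ne
  -- radius small
  have hrx : r n x < δ := by
    have := hrn x
    simp only [Pi.zero_apply, Real.dist_eq, zero_sub, abs_neg, abs_of_pos (hr_pos n x)] at this
    exact this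
  -- integrability of h * f i on B
  have hint : ∀ i, IntegrableOn (fun y => h y * f i y) B volume := fun i =>
    ((hf_int i).bdd_mul (c := Mh) hh.continuous.aestronglyMeasurable
      (ae_of_all _ fun y => by simpa [Real.norm_eq_abs] using hMh y)).integrableOn
  -- integrability of h * avg on B
  have havg_int : IntegrableOn
      (fun y => h y * ((1 / (n : ℝ)) * ∑ i ∈ Finset.range n, f i y)) B volume := by
    have : (fun y => h y * ((1 / (n : ℝ)) * ∑ i ∈ Finset.range n, f i y))
        = fun y => (1 / (n : ℝ)) * ∑ i ∈ Finset.range n, (h y * f i y) := by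
      funext y
      simp only [Finset.mul_sum]
      exact Finset.sum_congr rfl fun i _ => by ring
    rw [this]
    exact (integrable_finset_sum _ (fun i _ => hint i)).const_mul _
  -- step 1 : F n x = (1/V) * ∫_B h * avg
  have step1 :
      (1 / ((n : ℝ) * V)) * ∑ i ∈ Finset.range n, ∫ y in B, h y * f i y
        = (1 / V) * ∫ y in B, h y * ((1 / (n : ℝ)) * ∑ i ∈ Finset.range n, f i y) := by
    have e1 : ∫ y in B, h y * ((1 / (n : ℝ)) * ∑ i ∈ Finset.range n, f i y)
        = (1 / (n : ℝ)) * ∑ i ∈ Finset.range n, ∫ y in B, h y * f i y := by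
      have : (fun y => h y * ((1 / (n : ℝ)) * ∑ i ∈ Finset.range n, f i y))
          = fun y => (1 / (n : ℝ)) * ∑ i ∈ Finset.range n, (h y * f i y) := by
        funext y
        simp only [Finset.mul_sum]
        exact Finset.sum_congr rfl fun i _ => by ring
      rw [this, integral_const_mul, integral_finset_sum _ (fun i _ => hint i)]
    rw [e1]
    field_simp
  have hVne : V ≠ 0 := ne_of_gt hVpos
  -- the difference
  have step3 :
      (1 / ((n : ℝ) * V)) * (∑ i ∈ Finset.range n, ∫ y in B, h y * f i y) - h x * g x
        = (1 / V) * ∫ y in B,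
            (h y * ((1 / (n : ℝ)) * ∑ i ∈ Finset.range n, f i y) - h x * g x) := by
    have e2 : ∫ y in B, (h y * ((1 / (n : ℝ)) * ∑ i ∈ Finset.range n, f i y) - h x * g x)
        = (∫ y in B, h y * ((1 / (n : ℝ)) * ∑ i ∈ Finset.range n, f i y)) - (h x * g x) * V := by
      rw [integral_sub havg_int (integrableOn_const measure_ball_lt_top.ne),
        setIntegral_const, smul_eq_mul, measureReal_def, ← hV]
      ring
    rw [step1, e2]
    field_simp
  -- pointwise bound on B
  have hpt : ∀ y ∈ B,
      ‖h y * ((1 / (n : ℝ)) * ∑ i ∈ Finset.range n, f i y) - h x * g x‖ ≤ Mh * ε1 + ε / 4 := by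
    intro y hy
    have hyd : dist x y < δ := by
      rw [dist_comm]
      exact lt_trans (mem_ball.1 hy) hrx
    have t1 : |h y * ((1 / (n : ℝ)) * ∑ i ∈ Finset.range n, f i y) - h y * g y| ≤ Mh * ε1 := by
      rw [← mul_sub, abs_mul]
      have := hn y
      rw [Real.dist_eq, abs_sub_comm] at this
      exact mul_le_mul (hMh y) this.le (abs_nonneg _) hMh0
    have t2 : |h y * g y - h x * g x| ≤ ε / 4 := Hδ x y hyd
    calc ‖h y * ((1 / (n : ℝ)) * ∑ i ∈ Finset.range n, f i y) - h x * g x‖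
        = |(h y * ((1 / (n : ℝ)) * ∑ i ∈ Finset.range n, f i y) - h y * g y)
            + (h y * g y - h x * g x)| := by rw [Real.norm_eq_abs]; ring_nf
      _ ≤ |h y * ((1 / (n : ℝ)) * ∑ i ∈ Finset.range n, f i y) - h y * g y|
            + |h y * g y - h x * g x| := abs_add_le _ _
      _ ≤ Mh * ε1 + ε / 4 := add_le_add t1 t2
  -- bound the integral
  have hbound : ‖∫ y in B,
      (h y * ((1 / (n : ℝ)) * ∑ i ∈ Finset.range n, f i y) - h x * g x)‖
        ≤ (Mh * ε1 + ε / 4) * V := by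
    exact norm_setIntegral_le_of_norm_le_const measure_ball_lt_top hpt
  -- finish
  rw [Real.dist_eq, abs_sub_comm, step3, abs_mul, abs_of_pos (by positivity : (0:ℝ) < 1 / V)]
  rw [Real.norm_eq_abs] at hbound
  calc (1 / V) * |∫ y in B,
        (h y * ((1 / (n : ℝ)) * ∑ i ∈ Finset.range n, f i y) - h x * g x)|
      ≤ (1 / V) * ((Mh * ε1 + ε / 4) * V) := by
        apply mul_le_mul_of_nonneg_left hbound (by positivity)
    _ = Mh * ε1 + ε / 4 := by field_simp
    _ ≤ ε / 4 + ε / 4 := by linarith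
    _ < ε := by linarith
end

section
/- Let r_n > 0 satisfy r_n → 0 and n r_n^d / log n → ∞ as n → ∞, and for x ∈ ℝ^d let N_tot(n,x) = #{1 ≤ i ≤ n : X_i ∈ B(x,r_n)}. Then for μ-almost every x, N_tot(n,x) / (n·μ(B(x,r_n))) → 1 almost surely as n → ∞. -/
open MeasureTheory ProbabilityTheory Filter Metric
open scoped Classical





section Aux

variable {Ω : Type*} [MeasurableSpace Ω] {P : Measure Ω} [IsProbabilityMeasure P]
variable {E : Type*} [MeasurableSpace E]

lemma mgf_indicator_eq (f : Ω → E) (hf : Measurable f) {B : Set E} (hB : MeasurableSet B)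
    (t : ℝ) :
    mgf (fun ω => if f ω ∈ B then (1:ℝ) else 0) P t
      = 1 + (P (f ⁻¹' B)).toReal * (Real.exp t - 1) := by
  have hmeas : MeasurableSet (f ⁻¹' B) := hf hB
  have h1 : (fun ω => Real.exp (t * (if f ω ∈ B then (1:ℝ) else 0)))
      = fun ω => 1 + (f ⁻¹' B).indicator (fun _ => Real.exp t - 1) ω := by
    funext ω
    by_cases h : f ω ∈ B <;> simp [h, Set.indicator_apply, Set.mem_preimage]
  rw [mgf, h1,
    integral_add (integrable_const 1) ((integrable_const (Real.exp t - 1)).indicator hmeas),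
    integral_indicator_const _ hmeas]
  simp [mul_comm, measureReal_def]

lemma mgf_indicator_le (f : Ω → E) (hf : Measurable f) {B : Set E} (hB : MeasurableSet B)
    (t : ℝ) :
    mgf (fun ω => if f ω ∈ B then (1:ℝ) else 0) P t
      ≤ Real.exp ((P (f ⁻¹' B)).toReal * (Real.exp t - 1)) := by
  rw [mgf_indicator_eq f hf hB t, add_comm]
  exact Real.add_one_le_exp _

variable {X : ℕ → Ω → E}

lemma mgf_count_le {μ : Measure E} (hXmeas : ∀ i, Measurable (X i))
    (hXlaw : ∀ i, P.map (X i) = μ)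
    (hXindep : iIndepFun X P)
    {B : Set E} (hB : MeasurableSet B) (n : ℕ) (t : ℝ) :
    mgf (fun ω => ∑ i ∈ Finset.range n, if X i ω ∈ B then (1:ℝ) else 0) P t
      ≤ Real.exp ((n : ℝ) * (μ B).toReal * (Real.exp t - 1)) := by
  have hp : ∀ i, P (X i ⁻¹' B) = μ B := fun i => by
    rw [← hXlaw i, Measure.map_apply (hXmeas i) hB]
  set g : E → ℝ := fun v => if v ∈ B then (1:ℝ) else 0 with hg
  have hgmeas : Measurable g := Measurable.ite hB measurable_const measurable_const
  have hYindep : iIndepFun (fun i => g ∘ X i) P :=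
    hXindep.comp (fun _ => g) (fun _ => hgmeas)
  have hYmeas : ∀ i, Measurable (g ∘ X i) := fun i => hgmeas.comp (hXmeas i)
  have hfun : (fun ω => ∑ i ∈ Finset.range n, if X i ω ∈ B then (1:ℝ) else 0)
      = ∑ i ∈ Finset.range n, (g ∘ X i) := by
    funext ω; rw [Finset.sum_apply]; rfl
  have hone : ∀ i, mgf (g ∘ X i) P t = 1 + (μ B).toReal * (Real.exp t - 1) := fun i => by
    have h := mgf_indicator_eq (P := P) (X i) (hXmeas i) hB t
    rw [hp i] at h
    exact h
  have hnn : 0 ≤ 1 + (μ B).toReal * (Real.exp t - 1) := by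
    rw [← hone 0]; exact mgf_nonneg
  calc mgf (fun ω => ∑ i ∈ Finset.range n, if X i ω ∈ B then (1:ℝ) else 0) P t
      = ∏ i ∈ Finset.range n, mgf (g ∘ X i) P t := by
        rw [hfun, hYindep.mgf_sum hYmeas]
    _ = (1 + (μ B).toReal * (Real.exp t - 1)) ^ n := by
        rw [Finset.prod_congr rfl fun i _ => hone i, Finset.prod_const, Finset.card_range]
    _ ≤ Real.exp ((μ B).toReal * (Real.exp t - 1)) ^ n := by
        exact pow_le_pow_left₀ hnn (by rw [add_comm]; exact Real.add_one_le_exp _) n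
    _ = Real.exp ((n : ℝ) * (μ B).toReal * (Real.exp t - 1)) := by
        rw [← Real.exp_nat_mul]; ring_nf

end Aux


section Aux2

variable {Ω : Type*} [MeasurableSpace Ω] {P : Measure Ω} [IsProbabilityMeasure P]
variable {E : Type*} [MeasurableSpace E] {X : ℕ → Ω → E}

lemma count_exp_integrable (hXmeas : ∀ i, Measurable (X i))
    {B : Set E} (hB : MeasurableSet B) (n : ℕ) (t : ℝ) :
    Integrable (fun ω => Real.exp (t *
      (∑ i ∈ Finset.range n, if X i ω ∈ B then (1:ℝ) else 0))) P := by
  have hSmeas : Measurable (fun ω => ∑ i ∈ Finset.range n,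
      if X i ω ∈ B then (1:ℝ) else 0) :=
    Finset.measurable_sum _ fun i _ =>
      Measurable.ite ((hXmeas i) hB) measurable_const measurable_const
  refine (integrable_const (Real.exp (|t| * n))).mono'
    ((hSmeas.const_mul t).exp.aestronglyMeasurable) (ae_of_all _ fun ω => ?_)
  have hnn : 0 ≤ ∑ i ∈ Finset.range n, if X i ω ∈ B then (1:ℝ) else 0 :=
    Finset.sum_nonneg fun i _ => by positivity
  have hle : (∑ i ∈ Finset.range n, if X i ω ∈ B then (1:ℝ) else 0) ≤ n := by
    calc (∑ i ∈ Finset.range n, if X i ω ∈ B then (1:ℝ) else 0)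
        ≤ ∑ _i ∈ Finset.range n, (1:ℝ) :=
          Finset.sum_le_sum fun i _ => by split <;> norm_num
      _ = n := by simp
  rw [Real.norm_eq_abs, Real.abs_exp, Real.exp_le_exp]
  calc t * (∑ i ∈ Finset.range n, if X i ω ∈ B then (1:ℝ) else 0)
      ≤ |t| * (∑ i ∈ Finset.range n, if X i ω ∈ B then (1:ℝ) else 0) :=
        mul_le_mul_of_nonneg_right (le_abs_self t) hnn
    _ ≤ |t| * n := mul_le_mul_of_nonneg_left hle (abs_nonneg t)

lemma count_upper_tail {μ : Measure E} (hXmeas : ∀ i, Measurable (X i))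
    (hXlaw : ∀ i, P.map (X i) = μ)
    (hXindep : iIndepFun X P)
    {B : Set E} (hB : MeasurableSet B) (n : ℕ) {t : ℝ} (a : ℝ) (ht : 0 ≤ t) :
    (P {ω | a ≤ ∑ i ∈ Finset.range n, if X i ω ∈ B then (1:ℝ) else 0}).toReal
      ≤ Real.exp (-t * a + (n : ℝ) * (μ B).toReal * (Real.exp t - 1)) := by
  calc (P {ω | a ≤ ∑ i ∈ Finset.range n, if X i ω ∈ B then (1:ℝ) else 0}).toReal
      ≤ Real.exp (-t * a) *
        mgf (fun ω => ∑ i ∈ Finset.range n, if X i ω ∈ B then (1:ℝ) else 0) P t :=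
        measure_ge_le_exp_mul_mgf a ht (count_exp_integrable hXmeas hB n t)
    _ ≤ Real.exp (-t * a) * Real.exp ((n : ℝ) * (μ B).toReal * (Real.exp t - 1)) :=
        mul_le_mul_of_nonneg_left (mgf_count_le hXmeas hXlaw hXindep hB n t)
          (Real.exp_pos _).le
    _ = _ := (Real.exp_add _ _).symm

lemma count_lower_tail {μ : Measure E} (hXmeas : ∀ i, Measurable (X i))
    (hXlaw : ∀ i, P.map (X i) = μ)
    (hXindep : iIndepFun X P)
    {B : Set E} (hB : MeasurableSet B) (n : ℕ) {t : ℝ} (a : ℝ) (ht : t ≤ 0) :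
    (P {ω | (∑ i ∈ Finset.range n, if X i ω ∈ B then (1:ℝ) else 0) ≤ a}).toReal
      ≤ Real.exp (-t * a + (n : ℝ) * (μ B).toReal * (Real.exp t - 1)) := by
  calc (P {ω | (∑ i ∈ Finset.range n, if X i ω ∈ B then (1:ℝ) else 0) ≤ a}).toReal
      ≤ Real.exp (-t * a) *
        mgf (fun ω => ∑ i ∈ Finset.range n, if X i ω ∈ B then (1:ℝ) else 0) P t :=
        measure_le_le_exp_mul_mgf a ht (count_exp_integrable hXmeas hB n t)
    _ ≤ Real.exp (-t * a) * Real.exp ((n : ℝ) * (μ B).toReal * (Real.exp t - 1)) :=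
        mul_le_mul_of_nonneg_left (mgf_count_le hXmeas hXlaw hXindep hB n t)
          (Real.exp_pos _).le
    _ = _ := (Real.exp_add _ _).symm

lemma chernoff_rate_pos {ε : ℝ} (h0 : 0 < ε) (h1 : ε < 1) :
    0 < min ((1+ε) * Real.log (1+ε) - ε) ((1-ε) * Real.log (1-ε) + ε) := by
  have h1p : (0:ℝ) < 1 + ε := by linarith
  have h1m : (0:ℝ) < 1 - ε := by linarith
  have hup : 0 < Real.log (1+ε) := Real.log_pos (by linarith)
  have hlo : Real.log (1-ε) < 0 := Real.log_neg h1m (by linarith)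
  refine lt_min ?_ ?_
  · have hu := Real.add_one_lt_exp (x := -Real.log (1+ε)) (by linarith)
    rw [Real.exp_neg, Real.exp_log h1p] at hu
    have h2 : (-Real.log (1+ε) + 1) * (1+ε) < 1 := by
      have := mul_lt_mul_of_pos_right hu h1p
      rwa [inv_mul_cancel₀ h1p.ne'] at this
    nlinarith
  · have hu := Real.add_one_lt_exp (x := -Real.log (1-ε)) (by linarith)
    rw [Real.exp_neg, Real.exp_log h1m] at hu
    have h2 : (-Real.log (1-ε) + 1) * (1-ε) < 1 := by
      have := mul_lt_mul_of_pos_right hu h1m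
      rwa [inv_mul_cancel₀ h1m.ne'] at this
    nlinarith

end Aux2
section Aux3

variable {Ω : Type*} [MeasurableSpace Ω] {P : Measure Ω} [IsProbabilityMeasure P]
variable {E : Type*} [MeasurableSpace E] {X : ℕ → Ω → E}

lemma as_ratio_tendsto {μ : Measure E} [IsProbabilityMeasure μ]
    (hXmeas : ∀ i, Measurable (X i)) (hXlaw : ∀ i, P.map (X i) = μ)
    (hXindep : iIndepFun X P)
    (B : ℕ → Set E) (hB : ∀ n, MeasurableSet (B n))
    (hgrow : ∀ C : ℝ, ∀ᶠ n : ℕ in atTop, C * Real.log n ≤ (n : ℝ) * (μ (B n)).toReal) :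
    ∀ᵐ ω ∂P, Tendsto (fun n : ℕ =>
      (((Finset.range n).filter (fun i => X i ω ∈ B n)).card : ℝ) /
        ((n : ℝ) * (μ (B n)).toReal)) atTop (nhds 1) := by
  set p : ℕ → ℝ := fun n => (μ (B n)).toReal with hp
  set S : ℕ → Ω → ℝ := fun n ω => ∑ i ∈ Finset.range n, if X i ω ∈ B n then (1:ℝ) else 0
    with hS
  have hcard : ∀ n ω, (((Finset.range n).filter (fun i => X i ω ∈ B n)).card : ℝ) = S n ω := by
    intro n ω
    rw [Finset.card_filter]
    push_cast
    rfl
  have hppos : ∀ᶠ n : ℕ in atTop, 0 < (n : ℝ) * p n := by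
    filter_upwards [hgrow 1, eventually_ge_atTop 2] with n h1 h2
    have hn1 : (1:ℝ) < n := by exact_mod_cast h2
    have hlog : 0 < Real.log n := Real.log_pos hn1
    nlinarith
  have key : ∀ k : ℕ, ∀ᵐ ω ∂P, ∀ᶠ n : ℕ in atTop,
      (1 - 1/((k:ℝ)+2)) * ((n:ℝ) * p n) < S n ω ∧
        S n ω < (1 + 1/((k:ℝ)+2)) * ((n:ℝ) * p n) := by
    intro k
    set ε : ℝ := 1/((k:ℝ)+2) with hε
    have hε0 : 0 < ε := by positivity
    have hε1 : ε < 1 := by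
      rw [hε, div_lt_one (by positivity)]
      have : (0:ℝ) ≤ (k:ℝ) := Nat.cast_nonneg k
      linarith
    set c := min ((1+ε) * Real.log (1+ε) - ε) ((1-ε) * Real.log (1-ε) + ε) with hc
    have hcpos : 0 < c := chernoff_rate_pos hε0 hε1
    set A : ℕ → Set Ω := fun n =>
      {ω | (1+ε) * ((n:ℝ) * p n) ≤ S n ω} ∪ {ω | S n ω ≤ (1-ε) * ((n:ℝ) * p n)} with hA
    have hnppos : ∀ n : ℕ, 0 ≤ (n:ℝ) * p n := fun n => by positivity
    have hbound : ∀ n, (P (A n)).toReal ≤ 2 * Real.exp (-(c * ((n:ℝ) * p n))) := by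
      intro n
      have hup := count_upper_tail hXmeas hXlaw hXindep (hB n) n
        ((1+ε) * ((n:ℝ) * p n)) (Real.log_nonneg (by linarith) : 0 ≤ Real.log (1+ε))
      have hlo := count_lower_tail hXmeas hXlaw hXindep (hB n) n
        ((1-ε) * ((n:ℝ) * p n)) (Real.log_nonpos (by linarith) (by linarith) :
          Real.log (1-ε) ≤ 0)
      rw [Real.exp_log (by linarith : (0:ℝ) < 1+ε)] at hup
      rw [Real.exp_log (by linarith : (0:ℝ) < 1-ε)] at hlo
      have hup' : -Real.log (1+ε) * ((1+ε) * ((n:ℝ) * p n))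
            + (n:ℝ) * p n * (1+ε-1) ≤ -(c * ((n:ℝ) * p n)) := by
        have h1 : c ≤ (1+ε) * Real.log (1+ε) - ε := min_le_left _ _
        have h2 := hnppos n
        nlinarith
      have hlo' : -Real.log (1-ε) * ((1-ε) * ((n:ℝ) * p n))
            + (n:ℝ) * p n * (1-ε-1) ≤ -(c * ((n:ℝ) * p n)) := by
        have h1 : c ≤ (1-ε) * Real.log (1-ε) + ε := min_le_right _ _
        have h2 := hnppos n
        nlinarith
      have hA1 : (P {ω | (1+ε) * ((n:ℝ) * p n) ≤ S n ω}).toReal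
          ≤ Real.exp (-(c * ((n:ℝ) * p n))) :=
        hup.trans (Real.exp_le_exp.mpr hup')
      have hA2 : (P {ω | S n ω ≤ (1-ε) * ((n:ℝ) * p n)}).toReal
          ≤ Real.exp (-(c * ((n:ℝ) * p n))) :=
        hlo.trans (Real.exp_le_exp.mpr hlo')
      have hmono : (P (A n)).toReal ≤
          (P {ω | (1+ε) * ((n:ℝ) * p n) ≤ S n ω}).toReal
            + (P {ω | S n ω ≤ (1-ε) * ((n:ℝ) * p n)}).toReal := by
        rw [← ENNReal.toReal_add (measure_ne_top _ _) (measure_ne_top _ _)]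
        exact ENNReal.toReal_mono
          (by exact ENNReal.add_ne_top.mpr ⟨measure_ne_top _ _, measure_ne_top _ _⟩)
          (measure_union_le _ _)
      linarith
    have hsmall : ∀ᶠ n : ℕ in atTop, (P (A n)).toReal ≤ 2 * ((n:ℝ)^2)⁻¹ := by
      filter_upwards [hgrow (2/c), eventually_ge_atTop 1] with n hn h1
      have hn1 : (1:ℝ) ≤ n := by exact_mod_cast h1
      have hlog : 0 ≤ Real.log n := Real.log_nonneg hn1
      have h2 : 2 * Real.log n ≤ c * ((n:ℝ) * p n) := by
        have := mul_le_mul_of_nonneg_left hn hcpos.le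
        calc 2 * Real.log n = c * (2/c * Real.log n) := by field_simp
          _ ≤ c * ((n:ℝ) * p n) := this
      have h3 : Real.exp (-(c * ((n:ℝ) * p n))) ≤ ((n:ℝ)^2)⁻¹ := by
        have : Real.exp (-(c * ((n:ℝ) * p n))) ≤ Real.exp (-(2 * Real.log n)) :=
          Real.exp_le_exp.mpr (by linarith)
        refine this.trans ?_
        rw [Real.exp_neg]
        have h2n : Real.exp (2 * Real.log n) = (n:ℝ)^2 := by
          rw [show ((2:ℝ)) = ((2:ℕ):ℝ) by norm_num, Real.exp_nat_mul,
            Real.exp_log (by linarith)]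
        rw [h2n]
      calc (P (A n)).toReal ≤ 2 * Real.exp (-(c * ((n:ℝ) * p n))) := hbound n
        _ ≤ 2 * ((n:ℝ)^2)⁻¹ := by linarith
    obtain ⟨N, hN⟩ := eventually_atTop.mp hsmall
    have hsummable : Summable (fun n => (P (A n)).toReal) := by
      rw [← summable_nat_add_iff N]
      have hgsum : Summable (fun n : ℕ => 2 * (((n + N : ℕ):ℝ)^2)⁻¹) := by
        have h0 : Summable (fun n : ℕ => 2 * (((n:ℕ):ℝ)^2)⁻¹) := by
          have := (Real.summable_one_div_nat_pow (p := 2)).mpr one_lt_two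
          simpa [one_div] using this.mul_left 2
        exact (summable_nat_add_iff N).mpr h0
      exact Summable.of_nonneg_of_le (fun n => ENNReal.toReal_nonneg)
        (fun n => hN (n + N) (Nat.le_add_left _ _)) hgsum
    have htsum : (∑' n, P (A n)) ≠ ⊤ := by
      have heq : (∑' n, P (A n)) = ENNReal.ofReal (∑' n, (P (A n)).toReal) := by
        rw [ENNReal.ofReal_tsum_of_nonneg (fun n => ENNReal.toReal_nonneg) hsummable]
        exact tsum_congr fun n => (ENNReal.ofReal_toReal (measure_ne_top _ _)).symm
      rw [heq]
      exact ENNReal.ofReal_ne_top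
    filter_upwards [MeasureTheory.ae_eventually_notMem htsum] with ω hω
    filter_upwards [hω] with n hn
    simp only [hA, Set.mem_union, Set.mem_setOf_eq, not_or, not_le] at hn
    exact ⟨hn.2, hn.1⟩
  filter_upwards [ae_all_iff.mpr key] with ω hω
  rw [Metric.tendsto_nhds]
  intro δ hδ
  obtain ⟨k, hk⟩ := exists_nat_one_div_lt hδ
  have hεδ : 1/((k:ℝ)+2) < δ := by
    refine lt_of_le_of_lt ?_ hk
    have : (0:ℝ) ≤ (k:ℝ) := Nat.cast_nonneg k
    exact one_div_le_one_div_of_le (by linarith) (by linarith)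
  filter_upwards [hω k, hppos] with n hn hnp
  rw [hcard n ω, Real.dist_eq]
  have h1 : S n ω / ((n:ℝ) * p n) < 1 + 1/((k:ℝ)+2) :=
    (div_lt_iff₀ hnp).mpr (by linarith [hn.2])
  have h2 : 1 - 1/((k:ℝ)+2) < S n ω / ((n:ℝ) * p n) :=
    (lt_div_iff₀ hnp).mpr (by linarith [hn.1])
  have : |S n ω / ((n:ℝ) * p n) - 1| < 1/((k:ℝ)+2) := abs_lt.mpr ⟨by linarith, by linarith⟩
  linarith

end Aux3

/-- `X_i` i.i.d. with law `μ` on `ℝ^d`, `r_n → 0` with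
`n r_n^d / log n → ∞`, and `N_tot(n,x) = #{i ≤ n : X_i ∈ B(x, r_n)}`.  Then for
`μ`-almost every `x`, `N_tot(n,x)/(n μ(B(x,r_n))) → 1` almost surely. -/
theorem ball_count_ratio_tendsto_one_ae
    {Ω : Type*} [MeasurableSpace Ω] (P : Measure Ω) [IsProbabilityMeasure P]
    (d : ℕ) (μ : Measure (EuclideanSpace ℝ (Fin d))) [IsProbabilityMeasure μ]
    (X : ℕ → Ω → EuclideanSpace ℝ (Fin d))
    (hXmeas : ∀ i, Measurable (X i))
    (hXlaw : ∀ i, P.map (X i) = μ)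
    (hXindep : iIndepFun X P)
    (r : ℕ → ℝ) (hr_pos : ∀ n, 0 < r n)
    (hr0 : Tendsto r atTop (nhds 0))
    (hrlog : Tendsto (fun n : ℕ => (n : ℝ) * r n ^ d / Real.log n) atTop atTop) :
    ∀ᵐ x ∂μ, ∀ᵐ ω ∂P,
      Tendsto (fun n : ℕ =>
          (((Finset.range n).filter (fun i => X i ω ∈ ball x (r n))).card : ℝ) /
            ((n : ℝ) * (μ (ball x (r n))).toReal))
        atTop (nhds 1) := by
  have hbes := Besicovitch.ae_tendsto_rnDeriv (volume : Measure (EuclideanSpace ℝ (Fin d))) μ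
  have hrnfin := Measure.rnDeriv_lt_top (volume : Measure (EuclideanSpace ℝ (Fin d))) μ
  filter_upwards [hbes, hrnfin] with x hx hLfin
  set L := (volume : Measure (EuclideanSpace ℝ (Fin d))).rnDeriv μ x with hL
  have hev : ∀ᶠ s in nhdsWithin (0:ℝ) (Set.Ioi 0),
      volume (closedBall x s) / μ (closedBall x s) < L + 1 :=
    hx.eventually_lt_const (ENNReal.lt_add_right hLfin.ne one_ne_zero)
  obtain ⟨R, hRpos, hR⟩ : ∃ R, 0 < R ∧ ∀ s : ℝ, 0 < s → s ≤ R →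
      volume (closedBall x s) / μ (closedBall x s) < L + 1 := by
    obtain ⟨u, hu, hsub⟩ := mem_nhdsGT_iff_exists_Ioc_subset.mp hev
    exact ⟨u, hu, fun s h1 h2 => hsub ⟨h1, h2⟩⟩
  set κ := volume (ball (0 : EuclideanSpace ℝ (Fin d)) 1) with hκ
  have hκ0 : κ ≠ 0 := (measure_ball_pos volume _ one_pos).ne'
  have hκfin : κ ≠ ⊤ := measure_ball_lt_top.ne
  set q : ENNReal := κ / (L + 1) with hq
  have hL1top : L + 1 ≠ ⊤ := (ENNReal.add_lt_top.mpr ⟨hLfin, ENNReal.one_lt_top⟩).ne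
  have hL10 : L + 1 ≠ 0 := by simp
  have hq0 : q ≠ 0 := by
    rw [hq]
    exact (ENNReal.div_pos hκ0 hL1top).ne'
  have hqfin : q ≠ ⊤ := (ENNReal.div_lt_top hκfin hL10).ne
  have hcb : ∀ s : ℝ, 0 < s → s ≤ R →
      ENNReal.ofReal (s ^ d) * q ≤ μ (closedBall x s) := by
    intro s hs1 hs2
    have hvol : volume (closedBall x s) = ENNReal.ofReal (s ^ d) * κ := by
      rw [Measure.addHaar_closedBall volume x hs1.le, finrank_euclideanSpace_fin]
    have hlt := hR s hs1 hs2
    have hvolne : volume (closedBall x s) ≠ 0 := by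
      rw [hvol]
      exact mul_ne_zero (ENNReal.ofReal_pos.mpr (by positivity)).ne' hκ0
    have hμ0 : μ (closedBall x s) ≠ 0 := by
      intro h0
      rw [h0, ENNReal.div_zero hvolne] at hlt
      exact not_top_lt hlt
    have hle : volume (closedBall x s) ≤ (L + 1) * μ (closedBall x s) := by
      have := (ENNReal.div_lt_iff (Or.inl hμ0) (Or.inl (measure_ne_top μ _))).mp hlt
      exact this.le
    calc ENNReal.ofReal (s ^ d) * q = volume (closedBall x s) / (L + 1) := by
          rw [hvol, hq, ENNReal.div_eq_inv_mul, ENNReal.div_eq_inv_mul]; ring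
      _ ≤ μ (closedBall x s) := by
          rw [ENNReal.div_le_iff_le_mul (Or.inl hL10) (Or.inl hL1top)]
          rw [mul_comm]
          exact hle
  have hball : ∀ s : ℝ, 0 < s → s ≤ R →
      ENNReal.ofReal ((s/2) ^ d) * q ≤ μ (ball x s) := by
    intro s hs1 hs2
    refine (hcb (s/2) (by linarith) (by linarith)).trans (measure_mono ?_)
    exact closedBall_subset_ball (by linarith)
  set c0 : ℝ := q.toReal / 2 ^ d with hc0
  have hc0pos : 0 < c0 := by
    rw [hc0]
    exact div_pos (ENNReal.toReal_pos hq0 hqfin) (by positivity)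
  have hgrow : ∀ C : ℝ, ∀ᶠ n : ℕ in atTop,
      C * Real.log n ≤ (n : ℝ) * (μ (ball x (r n))).toReal := by
    intro C
    have h1 : ∀ᶠ n : ℕ in atTop, max C 1 / c0 ≤ (n : ℝ) * r n ^ d / Real.log n :=
      hrlog.eventually_ge_atTop _
    have h2 : ∀ᶠ n : ℕ in atTop, r n ≤ R := hr0.eventually (eventually_le_nhds hRpos)
    have h3 : ∀ᶠ n : ℕ in atTop, (1:ℝ) < (n:ℝ) := by
      filter_upwards [eventually_ge_atTop 2] with n hn
      exact_mod_cast Nat.lt_of_lt_of_le Nat.one_lt_two hn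
    filter_upwards [h1, h2, h3] with n hn1 hn2 hn3
    have hlog : 0 < Real.log n := Real.log_pos hn3
    have hrn := hball (r n) (hr_pos n) hn2
    have hptoReal : c0 * r n ^ d ≤ (μ (ball x (r n))).toReal := by
      have hmono := ENNReal.toReal_mono (measure_ne_top μ _) hrn
      rw [ENNReal.toReal_mul, ENNReal.toReal_ofReal (pow_nonneg (by linarith [hr_pos n]) d)] at hmono
      calc c0 * r n ^ d = (r n / 2) ^ d * q.toReal := by
            rw [div_pow, hc0]; ring
        _ ≤ _ := hmono
    have e1 : max C 1 / c0 * Real.log n ≤ (n : ℝ) * r n ^ d := by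
      have := mul_le_mul_of_nonneg_right hn1 hlog.le
      rwa [div_mul_cancel₀ _ hlog.ne'] at this
    have e2 : max C 1 * Real.log n ≤ c0 * ((n : ℝ) * r n ^ d) := by
      have h := mul_le_mul_of_nonneg_left e1 hc0pos.le
      calc max C 1 * Real.log n = c0 * (max C 1 / c0 * Real.log n) := by
            field_simp
        _ ≤ c0 * ((n : ℝ) * r n ^ d) := h
    calc C * Real.log n ≤ max C 1 * Real.log n :=
          mul_le_mul_of_nonneg_right (le_max_left _ _) hlog.le
      _ ≤ c0 * ((n : ℝ) * r n ^ d) := e2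
      _ = (n : ℝ) * (c0 * r n ^ d) := by ring
      _ ≤ (n : ℝ) * (μ (ball x (r n))).toReal :=
          mul_le_mul_of_nonneg_left hptoReal (Nat.cast_nonneg n)
  exact as_ratio_tendsto hXmeas hXlaw hXindep (fun n => ball x (r n))
    (fun n => measurableSet_ball) hgrow
end

section
/- Suppose sup_{x ∈ ℝ^d} |(1/n)∑_{i=1}^n h_i(x) − h(x)| → 0 as n → ∞ for a measurable h : ℝ^d → [0,1]. Let r_n > 0 satisfy r_n → 0 and n r_n^d / log n → ∞ as n → ∞, and for x ∈ ℝ^d let N_1(n,x) = #{1 ≤ i ≤ n : X_i ∈ B(x,r_n), Y_i = 1}. Then for μ-almost every x with h(x) = 0, N_1(n,x) / (n·μ(B(x,r_n))) → 0 almost surely as n → ∞. -/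
open MeasureTheory ProbabilityTheory Filter Metric
open scoped Classical ENNReal Topology

/-- Borel–Cantelli with an eventual `1/n^2` bound. -/
lemma aux_bc {Ω : Type*} [MeasurableSpace Ω] (P : Measure Ω) [IsProbabilityMeasure P]
    (E : ℕ → Set Ω) (n₀ : ℕ)
    (hb : ∀ n, n₀ ≤ n → P (E n) ≤ ENNReal.ofReal (((n : ℝ) ^ 2)⁻¹)) :
    ∀ᵐ ω ∂P, ∀ᶠ n in atTop, ω ∉ E n := by
  set s : ℕ → Set Ω := fun n => if n₀ ≤ n then E n else ∅ with hs
  have hsum : Summable (fun n : ℕ => ((n : ℝ) ^ 2)⁻¹) := by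
    simpa using Real.summable_one_div_nat_pow.mpr (by norm_num : 1 < 2)
  have hP : ∀ n, P (s n) ≤ ENNReal.ofReal (((n : ℝ) ^ 2)⁻¹) := by
    intro n
    by_cases hn : n₀ ≤ n
    · simpa [s, hn] using hb n hn
    · simp [s, hn]
  have htsum : (∑' n, P (s n)) ≠ ∞ := by
    refine ne_top_of_le_ne_top ?_ (ENNReal.tsum_le_tsum hP)
    rw [← ENNReal.ofReal_tsum_of_nonneg (fun n => by positivity) hsum]
    exact ENNReal.ofReal_ne_top
  filter_upwards [ae_eventually_notMem htsum] with ω hω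
  filter_upwards [hω, eventually_ge_atTop n₀] with n h1 h2
  simpa [s, h2] using h1

/-- Chernoff-type bound for a sum of independent indicator variables. -/
lemma aux_chernoff {Ω : Type*} [MeasurableSpace Ω] (P : Measure Ω) [IsProbabilityMeasure P]
    (S : ℕ → Set Ω) (hS : ∀ i, MeasurableSet (S i))
    (hind : iIndepFun
      (fun i => (S i).indicator (fun _ => (1 : ℝ))) P) (n : ℕ) (a : ℝ) :
    (P {ω | a ≤ ∑ i ∈ Finset.range n, (S i).indicator (fun _ => (1 : ℝ)) ω}).toReal ≤
      Real.exp (-a + (Real.exp 1 - 1) * ∑ i ∈ Finset.range n, (P (S i)).toReal) := by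
  set Z : ℕ → Ω → ℝ := fun i => (S i).indicator (fun _ => (1 : ℝ)) with hZ
  have hZmeas : ∀ i, Measurable (Z i) := fun i => measurable_const.indicator (hS i)
  have hZ01 : ∀ i ω, Z i ω = 0 ∨ Z i ω = 1 := by
    intro i ω
    by_cases h : ω ∈ S i
    · right; simp [Z, h]
    · left; simp [Z, h]
  have hint : Integrable (fun ω => Real.exp (1 * ∑ i ∈ Finset.range n, Z i ω)) P := by
    refine Integrable.mono' (integrable_const (Real.exp n)) ?_ ?_
    · exact ((Finset.measurable_sum _ (fun i _ => hZmeas i)).const_mul 1).exp.aestronglyMeasurable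
    · refine Eventually.of_forall (fun ω => ?_)
      rw [Real.norm_eq_abs, abs_of_pos (Real.exp_pos _)]
      rw [one_mul]
      refine Real.exp_le_exp.mpr ?_
      calc ∑ i ∈ Finset.range n, Z i ω ≤ ∑ i ∈ Finset.range n, 1 := by
            refine Finset.sum_le_sum (fun i _ => ?_)
            rcases hZ01 i ω with h | h <;> simp [h]
        _ = n := by simp
  have key := measure_ge_le_exp_mul_mgf (X := fun ω => ∑ i ∈ Finset.range n, Z i ω)
    (μ := P) (t := 1) a zero_le_one hint
  have hsum_eq : (fun ω => ∑ i ∈ Finset.range n, Z i ω) = ∑ i ∈ Finset.range n, Z i := by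
    ext ω; simp
  rw [hsum_eq] at key
  rw [hind.mgf_sum hZmeas] at key
  have hmgf : ∀ i, mgf (Z i) P 1 = 1 + (Real.exp 1 - 1) * (P (S i)).toReal := by
    intro i
    have hpt : ∀ ω, Real.exp (1 * Z i ω) = 1 + (Real.exp 1 - 1) * Z i ω := by
      intro ω
      rcases hZ01 i ω with h | h <;> simp [h]
    have hZint : Integrable (Z i) P := (integrable_const (1 : ℝ)).indicator (hS i)
    rw [mgf]
    calc ∫ ω, Real.exp (1 * Z i ω) ∂P = ∫ ω, (1 + (Real.exp 1 - 1) * Z i ω) ∂P := by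
          exact integral_congr_ae (Eventually.of_forall hpt)
      _ = 1 + (Real.exp 1 - 1) * (P (S i)).toReal := by
          rw [integral_add (integrable_const 1) (hZint.const_mul _), integral_const,
            integral_const_mul]
          have : ∫ ω, Z i ω ∂P = (P (S i)).toReal := by
            rw [hZ]
            rw [integral_indicator_const (1 : ℝ) (hS i)]
            simp [measureReal_def]
          simp [this]
  calc (P {ω | a ≤ ∑ i ∈ Finset.range n, Z i ω}).toReal
      ≤ Real.exp (-1 * a) * ∏ i ∈ Finset.range n, mgf (Z i) P 1 := by
        exact key
    _ ≤ Real.exp (-1 * a) * ∏ i ∈ Finset.range n,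
          Real.exp ((Real.exp 1 - 1) * (P (S i)).toReal) := by
        refine mul_le_mul_of_nonneg_left ?_ (Real.exp_pos _).le
        refine Finset.prod_le_prod (fun i _ => ?_) (fun i _ => ?_)
        · rw [hmgf i]
          have h1 : (0:ℝ) ≤ (P (S i)).toReal := ENNReal.toReal_nonneg
          have h2 : (1:ℝ) ≤ Real.exp 1 := by
            have := Real.add_one_le_exp (1:ℝ); linarith
          nlinarith
        · rw [hmgf i]
          have := Real.add_one_le_exp ((Real.exp 1 - 1) * (P (S i)).toReal)
          linarith
    _ = Real.exp (-a + (Real.exp 1 - 1) * ∑ i ∈ Finset.range n, (P (S i)).toReal) := by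
        rw [← Real.exp_sum, ← Real.exp_add, neg_one_mul, Finset.mul_sum]

/-- Comparison of two measures on an open ball, from comparison on small closed balls. -/
lemma aux_ball_le {α : Type*} [MetricSpace α] [MeasurableSpace α]
    (μ ν : Measure α) (x : α) {r s₀ : ℝ} (hr : 0 < r) (hrs : r ≤ s₀) (c : ℝ≥0∞)
    (hres : ∀ s : ℝ, 0 < s → s < s₀ → ν (closedBall x s) ≤ c * μ (closedBall x s)) :
    ν (ball x r) ≤ c * μ (ball x r) := by
  set u : ℕ → ℝ := fun k => r - r / (k + 2) with hu
  have hu_pos : ∀ k, 0 < u k := by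
    intro k
    have h1 : r / ((k : ℝ) + 2) ≤ r / 2 := by
      apply div_le_div_of_nonneg_left hr.le (by norm_num)
      · linarith [Nat.cast_nonneg (α := ℝ) k]
    have : 0 < r / 2 := by positivity
    simp only [u]; linarith
  have hu_lt : ∀ k, u k < r := by
    intro k
    have : 0 < r / ((k : ℝ) + 2) := by positivity
    simp only [u]; linarith
  have hu_mono : Monotone (fun k => closedBall x (u k)) := by
    intro a b hab
    apply closedBall_subset_closedBall
    have : r / ((b : ℝ) + 2) ≤ r / ((a : ℝ) + 2) := by
      apply div_le_div_of_nonneg_left hr.le (by positivity)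
      have : (a : ℝ) ≤ (b : ℝ) := Nat.cast_le.mpr hab
      linarith
    simp only [u]; linarith
  have hball : ball x r = ⋃ k, closedBall x (u k) := by
    ext y
    simp only [mem_ball, Set.mem_iUnion, mem_closedBall]
    constructor
    · intro hy
      have hpos : 0 < r - dist y x := by linarith
      obtain ⟨k, hk⟩ := exists_nat_gt (r / (r - dist y x))
      refine ⟨k, ?_⟩
      have hk2 : r / ((k : ℝ) + 2) < r - dist y x := by
        rw [div_lt_iff₀ (by positivity)]
        have h3 : r / (r - dist y x) < (k : ℝ) + 2 := by linarith
        calc r = (r / (r - dist y x)) * (r - dist y x) := by field_simp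
          _ < ((k : ℝ) + 2) * (r - dist y x) := by
              exact mul_lt_mul_of_pos_right h3 hpos
          _ = (r - dist y x) * ((k : ℝ) + 2) := by ring
      simp only [u]; linarith
    · rintro ⟨k, hk⟩
      exact lt_of_le_of_lt hk (hu_lt k)
  rw [hball, hu_mono.directed_le.measure_iUnion,
    hu_mono.directed_le.measure_iUnion, ENNReal.mul_iSup]
  exact iSup_mono (fun k => hres (u k) (hu_pos k) (lt_of_lt_of_le (hu_lt k) hrs))

set_option maxHeartbeats 1600000 in
/-- Data: `X_i` i.i.d. with law `μ` on `ℝ^d`, `Y_i ∈ {0,1}` with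
`P(Y_i = 1, X_i ∈ A) = ∫_A h_i dμ`, pairs `(X_i,Y_i)` mutually independent.  Suppose
`sup_x |(1/n) ∑_{i=1}^n h_i(x) - h(x)| → 0`, `r_n → 0` and `n r_n^d / log n → ∞`.
With `N_1(n,x) = #{i ≤ n : X_i ∈ B(x,r_n), Y_i = 1}`, for `μ`-almost every `x` with
`h(x) = 0`, `N_1(n,x)/(n μ(B(x,r_n))) → 0` almost surely. -/
theorem label_count_ratio_tendsto_zero_ae
    {Ω : Type*} [MeasurableSpace Ω] (P : Measure Ω) [IsProbabilityMeasure P]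
    (d : ℕ) (μ : Measure (EuclideanSpace ℝ (Fin d))) [IsProbabilityMeasure μ]
    (X : ℕ → Ω → EuclideanSpace ℝ (Fin d)) (Y : ℕ → Ω → ℝ)
    (hXmeas : ∀ i, Measurable (X i)) (hYmeas : ∀ i, Measurable (Y i))
    (hY01 : ∀ i ω, Y i ω = 0 ∨ Y i ω = 1)
    (hXlaw : ∀ i, P.map (X i) = μ)
    (hindep : iIndepFun (fun i ω => (X i ω, Y i ω)) P)
    (η : ℕ → EuclideanSpace ℝ (Fin d) → ℝ)
    (hηmeas : ∀ i, Measurable (η i)) (hηrange : ∀ i x, η i x ∈ Set.Icc (0 : ℝ) 1)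
    (hjoint : ∀ i A, MeasurableSet A →
      P ({ω | Y i ω = 1} ∩ (X i) ⁻¹' A) = ∫⁻ x in A, ENNReal.ofReal (η i x) ∂μ)
    (h : EuclideanSpace ℝ (Fin d) → ℝ)
    (hmeas : Measurable h) (hrange : ∀ x, h x ∈ Set.Icc (0 : ℝ) 1)
    (hconv : TendstoUniformly
      (fun (n : ℕ) x => (1 / (n : ℝ)) * ∑ i ∈ Finset.range n, η i x) h atTop)
    (r : ℕ → ℝ) (hr_pos : ∀ n, 0 < r n)
    (hr0 : Tendsto r atTop (nhds 0))
    (hrlog : Tendsto (fun n : ℕ => (n : ℝ) * r n ^ d / Real.log n) atTop atTop) :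
    ∀ᵐ x ∂μ, h x = 0 → ∀ᵐ ω ∂P,
      Tendsto (fun n : ℕ =>
          (((Finset.range n).filter
              (fun i => X i ω ∈ ball x (r n) ∧ Y i ω = 1)).card : ℝ) /
            ((n : ℝ) * (μ (ball x (r n))).toReal))
        atTop (nhds 0) := by
  set ν : Measure (EuclideanSpace ℝ (Fin d)) :=
    μ.withDensity (fun y => ENNReal.ofReal (h y)) with hνdef
  haveI hνfin : IsFiniteMeasure ν := by
    constructor
    rw [hνdef, withDensity_apply _ MeasurableSet.univ, Measure.restrict_univ]
    calc ∫⁻ y, ENNReal.ofReal (h y) ∂μ ≤ ∫⁻ _, 1 ∂μ :=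
          lintegral_mono (fun y => ENNReal.ofReal_le_one.mpr (hrange y).2)
      _ < ⊤ := by simp
  have hA := Besicovitch.ae_tendsto_rnDeriv ν μ
  have hA' := Measure.rnDeriv_withDensity μ hmeas.ennreal_ofReal
  have hB := Besicovitch.ae_tendsto_rnDeriv
    (volume : Measure (EuclideanSpace ℝ (Fin d))) μ
  have hBfin := Measure.rnDeriv_lt_top (volume : Measure (EuclideanSpace ℝ (Fin d))) μ
  filter_upwards [hA, hA', hB, hBfin] with x hxA hxA' hxB hxBfin hx0
  -- `hx0 : h x = 0`
  -- convergence of r to 0 within positives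
  have hrn : Tendsto r atTop (𝓝[>] (0:ℝ)) :=
    tendsto_nhdsWithin_of_tendsto_nhds_of_eventually_within r hr0
      (Eventually.of_forall (fun n => hr_pos n))
  have hrn2 : Tendsto (fun n => r n / 2) atTop (𝓝[>] (0:ℝ)) := by
    refine tendsto_nhdsWithin_of_tendsto_nhds_of_eventually_within _ ?_
      (Eventually.of_forall (fun n => Set.mem_Ioi.mpr (by have := hr_pos n; positivity)))
    simpa using hr0.div_const 2
  ------------------------------------------------------------------
  -- Claim 1 : lower bound on μ (ball x (r n))
  ------------------------------------------------------------------
  set L := (volume : Measure (EuclideanSpace ℝ (Fin d))).rnDeriv μ x with hLdef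
  have hL1 : L < L + 1 := ENNReal.lt_add_right hxBfin.ne one_ne_zero
  have hBev : ∀ᶠ s in 𝓝[>] (0:ℝ),
      volume (closedBall x s) ≤ (L + 1) * μ (closedBall x s) := by
    filter_upwards [hxB.eventually (gt_mem_nhds hL1), self_mem_nhdsWithin] with s hs hs0
    have hs0' : (0:ℝ) < s := hs0
    have hμ0 : μ (closedBall x s) ≠ 0 := by
      intro hc
      have hvol : volume (closedBall x s) ≠ 0 :=
        (measure_closedBall_pos _ _ hs0').ne'
      rw [hc, ENNReal.div_zero hvol] at hs
      exact absurd hs not_top_lt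
    exact (ENNReal.div_le_iff_le_mul (Or.inl hμ0)
      (Or.inl (measure_ne_top μ _))).mp hs.le
  set V := volume (ball (0 : EuclideanSpace ℝ (Fin d)) 1) with hVdef
  have hV0 : V ≠ 0 := (measure_ball_pos _ _ one_pos).ne'
  have hVT : V ≠ ⊤ := measure_ball_lt_top.ne
  set c : ℝ≥0∞ := ENNReal.ofReal ((1/2 : ℝ) ^ d) * V / (L + 1) with hcdef
  have hLT : L + 1 ≠ ⊤ := by
    simp [ENNReal.add_eq_top, hxBfin.ne]
  have hL0 : L + 1 ≠ 0 := by simp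
  have hc0 : c ≠ 0 := by
    refine (ENNReal.div_pos (mul_ne_zero ?_ hV0) hLT).ne'
    simp only [ne_eq, ENNReal.ofReal_eq_zero, not_le]
    positivity
  have hcT : c ≠ ⊤ := (ENNReal.div_lt_top
    (ENNReal.mul_ne_top ENNReal.ofReal_ne_top hVT) hL0).ne
  have hpow : ∀ n, ENNReal.ofReal ((r n / 2) ^ d)
      = ENNReal.ofReal (r n ^ d) * ENNReal.ofReal ((1/2 : ℝ) ^ d) := by
    intro n
    rw [← ENNReal.ofReal_mul (pow_nonneg (hr_pos n).le d)]
    congr 1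
    rw [div_eq_mul_one_div (r n) 2, mul_pow]
  have hclaim1 : ∀ᶠ n in atTop,
      c * ENNReal.ofReal (r n ^ d) ≤ μ (ball x (r n)) := by
    filter_upwards [hrn2.eventually hBev] with n hn
    have h1 : μ (closedBall x (r n / 2)) ≤ μ (ball x (r n)) :=
      measure_mono (closedBall_subset_ball (by linarith [hr_pos n]))
    have h2 : volume (closedBall x (r n / 2))
        = ENNReal.ofReal ((r n / 2) ^ d) * V := by
      have := Measure.addHaar_closedBall (volume : Measure (EuclideanSpace ℝ (Fin d))) x
        (show (0:ℝ) ≤ r n / 2 by linarith [hr_pos n])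
      rwa [finrank_euclideanSpace_fin] at this
    have h3 : c * ENNReal.ofReal (r n ^ d)
        = (ENNReal.ofReal ((r n / 2) ^ d) * V) / (L + 1) := by
      rw [hcdef, hpow n]
      simp only [div_eq_mul_inv]
      ring
    rw [h3]
    rw [ENNReal.div_le_iff_le_mul (Or.inl hL0) (Or.inl hLT)]
    calc ENNReal.ofReal ((r n / 2) ^ d) * V = volume (closedBall x (r n / 2)) := h2.symm
      _ ≤ (L + 1) * μ (closedBall x (r n / 2)) := hn
      _ ≤ (L + 1) * μ (ball x (r n)) := by exact mul_le_mul_right h1 _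
      _ = μ (ball x (r n)) * (L + 1) := mul_comm _ _
  set cr : ℝ := c.toReal with hcrdef
  have hcr : 0 < cr := ENNReal.toReal_pos hc0 hcT
  have hclaim1' : ∀ᶠ n in atTop, cr * r n ^ d ≤ (μ (ball x (r n))).toReal := by
    filter_upwards [hclaim1] with n hn
    have := ENNReal.toReal_mono (measure_ne_top μ _) hn
    rwa [ENNReal.toReal_mul, ENNReal.toReal_ofReal (pow_nonneg (hr_pos n).le d)] at this
  ------------------------------------------------------------------
  -- Claim 2 : ν (ball x (r n)) ≤ ε μ (ball x (r n)) eventually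
  ------------------------------------------------------------------
  have hclaim2 : ∀ ε : ℝ, 0 < ε → ∀ᶠ n in atTop,
      ν (ball x (r n)) ≤ ENNReal.ofReal ε * μ (ball x (r n)) := by
    intro ε hε
    rw [hxA', hx0, ENNReal.ofReal_zero] at hxA
    have hev : ∀ᶠ s in 𝓝[>] (0:ℝ),
        ν (closedBall x s) ≤ ENNReal.ofReal ε * μ (closedBall x s) := by
      filter_upwards [hxA.eventually (gt_mem_nhds (ENNReal.ofReal_pos.mpr hε))] with s hs
      by_cases hμ : μ (closedBall x s) = 0
      · have : ν (closedBall x s) = 0 :=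
          (withDensity_absolutelyContinuous μ _) hμ
        simp [this]
      · exact (ENNReal.div_le_iff_le_mul (Or.inl hμ)
          (Or.inl (measure_ne_top μ _))).mp hs.le
    obtain ⟨s₀, hs₀pos, hs₀⟩ := mem_nhdsGT_iff_exists_Ioo_subset.mp hev
    filter_upwards [hrn.eventually (Eventually.filter_mono nhdsWithin_le_nhds (gt_mem_nhds hs₀pos))] with n hn
    exact aux_ball_le μ ν x (hr_pos n) hn.le (ENNReal.ofReal ε)
      (fun s hs1 hs2 => hs₀ ⟨hs1, hs2⟩)
  ------------------------------------------------------------------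
  -- Probabilistic part
  ------------------------------------------------------------------
  set p : ℕ → ℝ := fun n => (μ (ball x (r n))).toReal with hpdef
  set S : ℕ → ℕ → Set Ω := fun n i =>
    X i ⁻¹' (ball x (r n)) ∩ Y i ⁻¹' {1} with hSdef
  have hSmeas : ∀ n i, MeasurableSet (S n i) := fun n i =>
    ((hXmeas i) measurableSet_ball).inter ((hYmeas i) (measurableSet_singleton 1))
  have hSmem : ∀ n i ω, ω ∈ S n i ↔ (X i ω ∈ ball x (r n) ∧ Y i ω = 1) := by
    intro n i ω
    simp [S]
  have hSind : ∀ n, iIndepFun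
      (fun i => (S n i).indicator (fun _ => (1:ℝ))) P := by
    intro n
    have hmeasg : Measurable (Set.indicator
        ((ball x (r n)) ×ˢ ({1} : Set ℝ)) (fun _ => (1:ℝ))) :=
      measurable_const.indicator (measurableSet_ball.prod (measurableSet_singleton 1))
    have heq : (fun i => (S n i).indicator (fun _ => (1:ℝ)))
        = fun i => (Set.indicator ((ball x (r n)) ×ˢ ({1} : Set ℝ)) (fun _ => (1:ℝ)))
            ∘ (fun ω => (X i ω, Y i ω)) := by
      funext i ω
      simp only [Function.comp_apply, Set.indicator_apply, Set.mem_prod,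
        Set.mem_singleton_iff, hSmem n i ω]
    rw [heq]
    exact hindep.comp
      (fun _ => Set.indicator ((ball x (r n)) ×ˢ ({1} : Set ℝ)) (fun _ => (1:ℝ)))
      (fun _ => hmeasg)
  have hq : ∀ n i, P (S n i) = ∫⁻ y in ball x (r n), ENNReal.ofReal (η i y) ∂μ := by
    intro n i
    have hseteq : S n i = {ω | Y i ω = 1} ∩ X i ⁻¹' (ball x (r n)) := by
      ext ω
      simp only [Set.mem_inter_iff, Set.mem_preimage, Set.mem_setOf_eq,
        Set.mem_singleton_iff, hSmem n i ω]
      tauto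
    rw [hseteq, hjoint i _ measurableSet_ball]
  have hcard : ∀ n ω,
      (((Finset.range n).filter
        (fun i => X i ω ∈ ball x (r n) ∧ Y i ω = 1)).card : ℝ)
      = ∑ i ∈ Finset.range n, (S n i).indicator (fun _ => (1:ℝ)) ω := by
    intro n ω
    rw [Finset.card_filter]
    push_cast
    refine Finset.sum_congr rfl (fun i _ => ?_)
    simp only [Set.indicator_apply, hSmem n i ω, mem_ball]
  -- key per-δ statement
  have key : ∀ δ : ℝ, 0 < δ → ∀ᵐ ω ∂P, ∀ᶠ n in atTop,
      (((Finset.range n).filter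
        (fun i => X i ω ∈ ball x (r n) ∧ Y i ω = 1)).card : ℝ) /
        ((n : ℝ) * p n) ≤ δ := by
    intro δ hδ
    have he1 : (0:ℝ) < Real.exp 1 - 1 := by
      have := Real.add_one_le_exp (1:ℝ); linarith
    set ε : ℝ := δ / (4 * (Real.exp 1 - 1)) with hεdef
    have hε : 0 < ε := by positivity
    -- (c1) uniform convergence bound
    have hc1 : ∀ᶠ n : ℕ in atTop, ∀ y,
        (1/(n:ℝ)) * ∑ i ∈ Finset.range n, η i y ≤ h y + ε := by
      filter_upwards [(Metric.tendstoUniformly_iff.mp hconv) ε hε] with n hn y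
      have := hn y
      rw [Real.dist_eq] at this
      have := abs_lt.mp this
      linarith [this.1, this.2]
    -- (c4) growth condition
    have hc4 : ∀ᶠ n : ℕ in atTop,
        2 * Real.log n ≤ (δ/2) * (cr * ((n:ℝ) * r n ^ d)) := by
      have hM : ∀ᶠ n : ℕ in atTop, 4 / ((δ/2) * cr) ≤ (n:ℝ) * r n ^ d / Real.log n :=
        hrlog.eventually_ge_atTop _
      filter_upwards [hM, eventually_ge_atTop 2] with n hn hn2
      have hn1 : (1:ℝ) < (n:ℝ) := by
        have : 1 < n := by omega
        exact_mod_cast this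
      have hlog : 0 < Real.log n := Real.log_pos hn1
      rw [le_div_iff₀ hlog] at hn
      have hpos : (0:ℝ) < (δ/2) * cr := by positivity
      have := mul_le_mul_of_nonneg_left hn hpos.le
      have heq : ((δ/2) * cr) * (4 / ((δ/2) * cr) * Real.log n) = 4 * Real.log n := by
        field_simp
      calc 2 * Real.log n ≤ ((δ/2) * cr) * (4 / ((δ/2) * cr) * Real.log n) := by
            rw [heq]; linarith
          _ ≤ ((δ/2) * cr) * ((n:ℝ) * r n ^ d) := this
          _ = (δ/2) * (cr * ((n:ℝ) * r n ^ d)) := by ring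
    have hc2 := hclaim2 ε hε
    -- combine all eventual conditions
    obtain ⟨n₀, hn₀⟩ := eventually_atTop.mp
      (hc1.and (hc2.and (hclaim1'.and (hc4.and (eventually_ge_atTop 2)))))
    set Ev : ℕ → Set Ω := fun n =>
      {ω | δ * ((n:ℝ) * p n) ≤ ∑ i ∈ Finset.range n, (S n i).indicator (fun _ => (1:ℝ)) ω}
      with hEvdef
    have hbound : ∀ n, n₀ ≤ n → P (Ev n) ≤ ENNReal.ofReal (((n:ℝ)^2)⁻¹) := by
      intro n hn
      obtain ⟨h1, h2, h3, h4, h5⟩ := hn₀ n hn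
      have hn1 : (1:ℝ) < (n:ℝ) := by exact_mod_cast h5
      have hnpos : (0:ℝ) < (n:ℝ) := by linarith
      -- bound on the mean
      have hmean : ∑ i ∈ Finset.range n, P (S n i)
          ≤ (n : ℝ≥0∞) * (2 * (ENNReal.ofReal ε * μ (ball x (r n)))) := by
        have e1 : ∑ i ∈ Finset.range n, P (S n i)
            = ∫⁻ y in ball x (r n),
                ENNReal.ofReal (∑ i ∈ Finset.range n, η i y) ∂μ := by
          simp_rw [hq n]
          rw [← lintegral_finset_sum _ (fun i _ => (hηmeas i).ennreal_ofReal)]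
          congr 1
          funext y
          rw [ENNReal.ofReal_sum_of_nonneg (fun i _ => (hηrange i y).1)]
        rw [e1]
        have e2 : ∀ y, ENNReal.ofReal (∑ i ∈ Finset.range n, η i y)
            ≤ (n : ℝ≥0∞) * (ENNReal.ofReal (h y) + ENNReal.ofReal ε) := by
          intro y
          have hb : ∑ i ∈ Finset.range n, η i y ≤ (n:ℝ) * (h y + ε) := by
            have := h1 y
            have hsum_eq : ∑ i ∈ Finset.range n, η i y
                = (n:ℝ) * ((1/(n:ℝ)) * ∑ i ∈ Finset.range n, η i y) := by
              field_simp
            rw [hsum_eq]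
            exact mul_le_mul_of_nonneg_left this hnpos.le
          calc ENNReal.ofReal (∑ i ∈ Finset.range n, η i y)
              ≤ ENNReal.ofReal ((n:ℝ) * (h y + ε)) := ENNReal.ofReal_le_ofReal hb
            _ = (n : ℝ≥0∞) * (ENNReal.ofReal (h y) + ENNReal.ofReal ε) := by
                rw [ENNReal.ofReal_mul hnpos.le, ENNReal.ofReal_natCast,
                  ENNReal.ofReal_add (hrange y).1 hε.le]
        calc ∫⁻ y in ball x (r n), ENNReal.ofReal (∑ i ∈ Finset.range n, η i y) ∂μ
            ≤ ∫⁻ y in ball x (r n),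
                (n : ℝ≥0∞) * (ENNReal.ofReal (h y) + ENNReal.ofReal ε) ∂μ :=
              lintegral_mono (fun y => e2 y)
          _ = (n : ℝ≥0∞) * (∫⁻ y in ball x (r n),
                (ENNReal.ofReal (h y) + ENNReal.ofReal ε) ∂μ) := by
              exact lintegral_const_mul _ (hmeas.ennreal_ofReal.add measurable_const)
          _ = (n : ℝ≥0∞) * (ν (ball x (r n)) + ENNReal.ofReal ε * μ (ball x (r n))) := by
              congr 1
              rw [lintegral_add_right _ measurable_const, lintegral_const,
                Measure.restrict_apply MeasurableSet.univ, Set.univ_inter,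
                hνdef, withDensity_apply _ measurableSet_ball]
          _ ≤ (n : ℝ≥0∞) * (2 * (ENNReal.ofReal ε * μ (ball x (r n)))) := by
              refine mul_le_mul_right ?_ _
              rw [two_mul]
              exact add_le_add h2 le_rfl
      have hmeanR : ∑ i ∈ Finset.range n, (P (S n i)).toReal
          ≤ 2 * ε * ((n:ℝ) * p n) := by
        have hfin : ∀ i ∈ Finset.range n, P (S n i) ≠ ⊤ :=
          fun i _ => measure_ne_top P _
        rw [← ENNReal.toReal_sum hfin]
        have := ENNReal.toReal_mono ?_ hmean
        · calc (∑ i ∈ Finset.range n, P (S n i)).toReal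
              ≤ ((n : ℝ≥0∞) * (2 * (ENNReal.ofReal ε * μ (ball x (r n))))).toReal := this
            _ = 2 * ε * ((n:ℝ) * p n) := by
                rw [ENNReal.toReal_mul, ENNReal.toReal_mul, ENNReal.toReal_mul,
                  ENNReal.toReal_ofReal hε.le]
                simp [hpdef]
                ring
        · refine ENNReal.mul_ne_top (by simp) (ENNReal.mul_ne_top (by simp)
            (ENNReal.mul_ne_top ENNReal.ofReal_ne_top (measure_ne_top μ _)))
      -- Chernoff bound
      have hcher := aux_chernoff P (S n) (hSmeas n) (hSind n) n (δ * ((n:ℝ) * p n))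
      have hple : cr * r n ^ d ≤ p n := h3
      have hnp_pos : 0 < (n:ℝ) * p n := by
        have : (0:ℝ) < cr * r n ^ d := by
          have := hr_pos n; positivity
        nlinarith
      have hexp : -(δ * ((n:ℝ) * p n)) + (Real.exp 1 - 1) *
          ∑ i ∈ Finset.range n, (P (S n i)).toReal ≤ -(2 * Real.log n) := by
        have e3 : (Real.exp 1 - 1) * ∑ i ∈ Finset.range n, (P (S n i)).toReal
            ≤ (Real.exp 1 - 1) * (2 * ε * ((n:ℝ) * p n)) :=
          mul_le_mul_of_nonneg_left hmeanR he1.le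
        have e4 : (Real.exp 1 - 1) * (2 * ε * ((n:ℝ) * p n)) = (δ/2) * ((n:ℝ) * p n) := by
          rw [hεdef]; field_simp; ring
        have e5 : 2 * Real.log n ≤ (δ/2) * ((n:ℝ) * p n) := by
          calc 2 * Real.log n ≤ (δ/2) * (cr * ((n:ℝ) * r n ^ d)) := h4
            _ ≤ (δ/2) * ((n:ℝ) * p n) := by
                refine mul_le_mul_of_nonneg_left ?_ (by positivity)
                calc cr * ((n:ℝ) * r n ^ d) = (n:ℝ) * (cr * r n ^ d) := by ring
                  _ ≤ (n:ℝ) * p n := by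
                      exact mul_le_mul_of_nonneg_left hple hnpos.le
        nlinarith
      have hPev : (P (Ev n)).toReal ≤ ((n:ℝ)^2)⁻¹ := by
        calc (P (Ev n)).toReal
            ≤ Real.exp (-(δ * ((n:ℝ) * p n)) + (Real.exp 1 - 1) *
                ∑ i ∈ Finset.range n, (P (S n i)).toReal) := hcher
          _ ≤ Real.exp (-(2 * Real.log n)) := Real.exp_le_exp.mpr hexp
          _ = ((n:ℝ)^2)⁻¹ := by
              rw [Real.exp_neg]
              congr 1
              rw [show (2:ℝ) * Real.log n = Real.log ((n:ℝ)^2) by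
                    rw [Real.log_pow]; norm_num,
                Real.exp_log (by nlinarith [hn1])]
      rw [← ENNReal.ofReal_toReal (measure_ne_top P (Ev n))]
      exact ENNReal.ofReal_le_ofReal hPev
    -- Borel-Cantelli
    filter_upwards [aux_bc P Ev n₀ hbound] with ω hω
    rw [eventually_atTop] at hω ⊢
    obtain ⟨m₀, hm₀⟩ := hω
    refine ⟨max m₀ n₀, fun n hn => ?_⟩
    have hnm : m₀ ≤ n := le_trans (le_max_left _ _) hn
    have hnn : n₀ ≤ n := le_trans (le_max_right _ _) hn
    obtain ⟨h1, h2, h3, h4, h5⟩ := hn₀ n hnn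
    have hn1 : (1:ℝ) < (n:ℝ) := by exact_mod_cast h5
    have hnp_pos : 0 < (n:ℝ) * p n := by
      have hr' := hr_pos n
      have : (0:ℝ) < cr * r n ^ d := by positivity
      nlinarith
    have hnot := hm₀ n hnm
    rw [hEvdef] at hnot
    simp only [Set.mem_setOf_eq, not_le] at hnot
    rw [hcard n ω]
    rw [div_le_iff₀ hnp_pos]
    nlinarith
  -- assemble over δ = 1/(k+1)
  have hae : ∀ᵐ ω ∂P, ∀ k : ℕ, ∀ᶠ n in atTop,
      (((Finset.range n).filter
        (fun i => X i ω ∈ ball x (r n) ∧ Y i ω = 1)).card : ℝ) /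
        ((n : ℝ) * p n) ≤ 1 / ((k:ℝ) + 1) :=
    ae_all_iff.mpr (fun k => key (1 / ((k:ℝ) + 1)) (by positivity))
  filter_upwards [hae] with ω hω
  rw [NormedAddCommGroup.tendsto_nhds_zero]
  intro ε' hε'
  obtain ⟨k, hk⟩ := exists_nat_one_div_lt hε'
  filter_upwards [hω k] with n hn
  rw [Real.norm_eq_abs, abs_of_nonneg (by positivity)]
  exact lt_of_le_of_lt hn hk
end

section
/- Suppose sup_{x ∈ ℝ^d} |(1/n)∑_{i=1}^n h_i(x) − h(x)| → 0 as n → ∞ for a measurable h : ℝ^d → [0,1]. Let r_n > 0 satisfy r_n → 0 and n r_n^d / log n → ∞, and define the majority rule g_n(x) = 1 if N_1(n,x) > N_tot(n,x)/2 and g_n(x) = 0 otherwise, where N_tot(n,x) = #{i ≤ n : X_i ∈ B(x,r_n)} and N_1(n,x) = #{i ≤ n : X_i ∈ B(x,r_n), Y_i = 1}. Then for μ-almost every x with h(x) ≠ 1/2, P(g_n(x) = 0) → 1(h(x) < 1/2) and P(g_n(x) = 1) → 1(h(x) > 1/2) as n → ∞. -/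
open MeasureTheory ProbabilityTheory Filter Metric
open scoped Classical ENNReal NNReal

lemma measure_ball_eq_iSup_closedBall {α : Type*} [PseudoMetricSpace α] [MeasurableSpace α]
    (μ : Measure α) (x : α) {s : ℝ} (hs : 0 < s) :
    μ (ball x s) = ⨆ k : ℕ, μ (closedBall x (s - s / (k + 2))) := by
  have hmono : Monotone (fun k : ℕ => closedBall x (s - s / (k + 2))) := by
    intro k l hkl
    apply closedBall_subset_closedBall
    have h2 : s / (↑l + 2) ≤ s / (↑k + 2) := by
      apply div_le_div_of_nonneg_left hs.le (by positivity)
      exact_mod_cast by omega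
    linarith
  have hunion : ball x s = ⋃ k : ℕ, closedBall x (s - s / (k + 2)) := by
    ext y
    simp only [mem_ball, Set.mem_iUnion, mem_closedBall]
    constructor
    · intro hy
      have hpos : 0 < s - dist y x := by linarith
      obtain ⟨k, hk⟩ := exists_nat_gt (s / (s - dist y x))
      refine ⟨k, ?_⟩
      have h1 : s / (↑k + 2) ≤ s - dist y x := by
        rw [div_le_iff₀ (by positivity)]
        rw [div_lt_iff₀ hpos] at hk
        nlinarith [hpos, hk]
      linarith
    · rintro ⟨k, hk⟩
      have : 0 < s / (↑k + 2) := by positivity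
      linarith
  rw [hunion, hmono.measure_iUnion]

lemma meas_ball_le_mul {α : Type*} [PseudoMetricSpace α] [MeasurableSpace α]
    (ρ μ : Measure α) (x : α) {s : ℝ} (hs : 0 < s) {b : ℝ≥0∞}
    (hub : ∀ t : ℝ, 0 < t → t < s → ρ (closedBall x t) ≤ b * μ (closedBall x t)) :
    ρ (ball x s) ≤ b * μ (ball x s) := by
  rw [measure_ball_eq_iSup_closedBall ρ x hs, measure_ball_eq_iSup_closedBall μ x hs,
    ENNReal.mul_iSup]
  apply iSup_mono
  intro k
  have h1 : 0 < s - s / (↑k + 2) := by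
    have h3 : s / (↑k + 2) < s := by
      rw [div_lt_iff₀ (by positivity)]
      nlinarith
    linarith
  have h2 : s - s / (↑k + 2) < s := by
    have : 0 < s / (↑k + 2) := by positivity
    linarith
  exact hub _ h1 h2

lemma mul_meas_ball_le {α : Type*} [PseudoMetricSpace α] [MeasurableSpace α]
    (ρ μ : Measure α) (x : α) {s : ℝ} (hs : 0 < s) {b : ℝ≥0∞}
    (hlb : ∀ t : ℝ, 0 < t → t < s → b * μ (closedBall x t) ≤ ρ (closedBall x t)) :
    b * μ (ball x s) ≤ ρ (ball x s) := by
  rw [measure_ball_eq_iSup_closedBall ρ x hs, measure_ball_eq_iSup_closedBall μ x hs,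
    ENNReal.mul_iSup]
  apply iSup_mono
  intro k
  have h1 : 0 < s - s / (↑k + 2) := by
    have h3 : s / (↑k + 2) < s := by
      rw [div_lt_iff₀ (by positivity)]
      nlinarith
    linarith
  have h2 : s - s / (↑k + 2) < s := by
    have : 0 < s / (↑k + 2) := by positivity
    linarith
  exact hlb _ h1 h2

lemma integrable_of_abs_le {Ω : Type*} [MeasurableSpace Ω] {P : Measure Ω} [IsFiniteMeasure P]
    {f : Ω → ℝ} (hf : AEStronglyMeasurable f P) {C : ℝ} (hC : ∀ ω, |f ω| ≤ C) :
    Integrable f P :=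
  Integrable.mono' (integrable_const C) hf
    (Filter.Eventually.of_forall (fun ω => by rw [Real.norm_eq_abs]; exact hC ω))

lemma setIntegral_eq_withDensity_toReal {α : Type*} [MeasurableSpace α] (μ : Measure α)
    {f : α → ℝ} (hf : Measurable f) (h0 : ∀ y, 0 ≤ f y) {A : Set α} (hA : MeasurableSet A) :
    ((μ.withDensity fun y => ENNReal.ofReal (f y)) A).toReal = ∫ y in A, f y ∂μ := by
  rw [withDensity_apply _ hA,
    integral_eq_lintegral_of_nonneg_ae (Filter.Eventually.of_forall h0)
      hf.aestronglyMeasurable.restrict]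

set_option maxHeartbeats 2000000 in
/-- Data: `X_i` i.i.d. with law `μ` on `ℝ^d`, `Y_i ∈ {0,1}` with
`P(Y_i = 1, X_i ∈ A) = ∫_A h_i dμ`, pairs `(X_i,Y_i)` mutually independent.  Suppose
`sup_x |(1/n) ∑_{i=1}^n h_i(x) - h(x)| → 0`, `r_n → 0` and `n r_n^d / log n → ∞`, and let
`g_n(x)` be the majority rule over `B(x, r_n)`.  Then for `μ`-almost every `x` with
`h(x) ≠ 1/2`, `P(g_n(x) = 0) → 1(h(x) < 1/2)` and `P(g_n(x) = 1) → 1(h(x) > 1/2)`. -/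
theorem majority_rule_pointwise_convergence
    {Ω : Type*} [MeasurableSpace Ω] (P : Measure Ω) [IsProbabilityMeasure P]
    (d : ℕ) (μ : Measure (EuclideanSpace ℝ (Fin d))) [IsProbabilityMeasure μ]
    (X : ℕ → Ω → EuclideanSpace ℝ (Fin d)) (Y : ℕ → Ω → ℝ)
    (hXmeas : ∀ i, Measurable (X i)) (hYmeas : ∀ i, Measurable (Y i))
    (hY01 : ∀ i ω, Y i ω = 0 ∨ Y i ω = 1)
    (hXlaw : ∀ i, P.map (X i) = μ)
    (hindep : iIndepFun (fun i ω => (X i ω, Y i ω)) P)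
    (η : ℕ → EuclideanSpace ℝ (Fin d) → ℝ)
    (hηmeas : ∀ i, Measurable (η i)) (hηrange : ∀ i x, η i x ∈ Set.Icc (0 : ℝ) 1)
    (hjoint : ∀ i A, MeasurableSet A →
      P ({ω | Y i ω = 1} ∩ (X i) ⁻¹' A) = ∫⁻ x in A, ENNReal.ofReal (η i x) ∂μ)
    (h : EuclideanSpace ℝ (Fin d) → ℝ)
    (hmeas : Measurable h) (hrange : ∀ x, h x ∈ Set.Icc (0 : ℝ) 1)
    (hconv : TendstoUniformly
      (fun (n : ℕ) x => (1 / (n : ℝ)) * ∑ i ∈ Finset.range n, η i x) h atTop)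
    (r : ℕ → ℝ) (hr_pos : ∀ n, 0 < r n)
    (hr0 : Tendsto r atTop (nhds 0))
    (hrlog : Tendsto (fun n : ℕ => (n : ℝ) * r n ^ d / Real.log n) atTop atTop) :
    ∀ᵐ x ∂μ, h x ≠ 1 / 2 →
      Tendsto (fun n : ℕ =>
          (P {ω | ¬ (((Finset.range n).filter
                (fun i => X i ω ∈ ball x (r n) ∧ Y i ω = 1)).card * 2 >
              ((Finset.range n).filter
                (fun i => X i ω ∈ ball x (r n))).card)}).toReal)
        atTop (nhds (if h x < 1 / 2 then 1 else 0)) ∧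
      Tendsto (fun n : ℕ =>
          (P {ω | (((Finset.range n).filter
                (fun i => X i ω ∈ ball x (r n) ∧ Y i ω = 1)).card * 2 >
              ((Finset.range n).filter
                (fun i => X i ω ∈ ball x (r n))).card)}).toReal)
        atTop (nhds (if 1 / 2 < h x then 1 else 0)) := by
  classical
  set ν : Measure (EuclideanSpace ℝ (Fin d)) :=
    μ.withDensity (fun y => ENNReal.ofReal (h y)) with hνdef
  have hof : Measurable (fun y => ENNReal.ofReal (h y)) := hmeas.ennreal_ofReal
  have hνle : ∀ (A : Set (EuclideanSpace ℝ (Fin d))), MeasurableSet A → ν A ≤ μ A := by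
    intro A hA
    rw [hνdef, withDensity_apply _ hA]
    calc ∫⁻ y in A, ENNReal.ofReal (h y) ∂μ ≤ ∫⁻ _ in A, 1 ∂μ := by
          apply lintegral_mono
          intro y
          exact ENNReal.ofReal_le_one.mpr (hrange y).2
      _ = μ A := by simp
  haveI hνfin : IsFiniteMeasure ν := by
    constructor
    exact lt_of_le_of_lt (hνle Set.univ MeasurableSet.univ) (measure_lt_top μ _)
  have h1 := Besicovitch.ae_tendsto_rnDeriv ν μ
  have h2 := Besicovitch.ae_tendsto_rnDeriv volume μ
  have h3 := Measure.rnDeriv_lt_top volume μ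
  have h4 : ν.rnDeriv μ =ᵐ[μ] fun y => ENNReal.ofReal (h y) :=
    Measure.rnDeriv_withDensity μ hof
  filter_upwards [h1, h2, h3, h4] with x hx1 hx2 hx3 hx4 hne
  rw [hx4] at hx1
  -- basic notation
  set B : ℕ → Set (EuclideanSpace ℝ (Fin d)) := fun n => ball x (r n) with hBdef
  have hBmeas : ∀ n, MeasurableSet (B n) := fun n => measurableSet_ball
  set q : ℕ → ℝ := fun n => (μ (B n)).toReal with hqdef
  have hq_nonneg : ∀ n, 0 ≤ q n := fun n => ENNReal.toReal_nonneg
  have hμBfin : ∀ n, μ (B n) ≠ ⊤ := fun n => measure_ne_top μ _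
  -- Step 1 : lower bound on μ (B n)
  set K : ℝ≥0∞ := volume.rnDeriv μ x + 1 with hKdef
  have hKne : K ≠ ⊤ := ENNReal.add_ne_top.mpr ⟨hx3.ne, ENNReal.one_ne_top⟩
  have hK0 : K ≠ 0 := by
    rw [hKdef]
    simp
  set V : ℝ≥0∞ := volume (ball (0 : EuclideanSpace ℝ (Fin d)) 1) with hVdef
  have hV0 : V ≠ 0 := (Metric.measure_ball_pos volume 0 one_pos).ne'
  have hVfin : V ≠ ⊤ := measure_ball_lt_top.ne
  have hub : ∀ᶠ t in nhdsWithin (0:ℝ) (Set.Ioi 0),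
      volume (closedBall x t) ≤ K * μ (closedBall x t) := by
    have hlt : volume.rnDeriv μ x < K := ENNReal.lt_add_right hx3.ne one_ne_zero
    filter_upwards [hx2.eventually_lt_const hlt, self_mem_nhdsWithin] with t ht ht0
    have hc : volume (closedBall x t) ≠ 0 :=
      (lt_of_lt_of_le (Metric.measure_ball_pos volume x ht0)
        (measure_mono ball_subset_closedBall)).ne'
    exact ((ENNReal.div_lt_iff (Or.inr hc) (Or.inl (measure_ne_top _ _))).1 ht).le
  have hrt : Tendsto (fun n => r n / 2) atTop (nhdsWithin (0:ℝ) (Set.Ioi 0)) := by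
    apply tendsto_nhdsWithin_of_tendsto_nhds_of_eventually_within
    · simpa using hr0.div_const 2
    · exact Filter.Eventually.of_forall fun n => half_pos (hr_pos n)
  have hub2 : ∀ᶠ n in atTop, ENNReal.ofReal ((r n / 2) ^ d) * V ≤ K * μ (B n) := by
    filter_upwards [hrt.eventually hub] with n hn
    have hsub : closedBall x (r n / 2) ⊆ B n :=
      closedBall_subset_ball (by linarith [hr_pos n])
    have := hn.trans (mul_le_mul_right (measure_mono hsub) K)
    rwa [Measure.addHaar_closedBall volume x (half_pos (hr_pos n)).le,
      finrank_euclideanSpace_fin] at this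
  set c0 : ℝ≥0∞ := V / K with hc0def
  have hc00 : c0 ≠ 0 := by
    rw [hc0def]
    simp [ENNReal.div_eq_zero_iff, hV0, hKne]
  have hc0top : c0 ≠ ⊤ := by
    rw [hc0def]
    exact (ENNReal.div_lt_top hVfin hK0).ne
  have hqlb : ∀ᶠ n in atTop, (r n / 2) ^ d * c0.toReal ≤ q n := by
    filter_upwards [hub2] with n hn
    have h5 : ENNReal.ofReal ((r n / 2) ^ d) * V / K ≤ μ (B n) := by
      rw [ENNReal.div_le_iff_le_mul (Or.inl hK0) (Or.inl hKne)]
      rwa [mul_comm K (μ (B n))] at hn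
    rw [mul_div_assoc] at h5
    have h6 := ENNReal.toReal_mono (hμBfin n) h5
    rwa [ENNReal.toReal_mul, ENNReal.toReal_ofReal (pow_nonneg (by linarith [hr_pos n]) d)] at h6
  have hqpos : ∀ᶠ n in atTop, 0 < q n := by
    filter_upwards [hqlb] with n hn
    have : (0:ℝ) < (r n / 2) ^ d * c0.toReal :=
      mul_pos (pow_pos (half_pos (hr_pos n)) d) (ENNReal.toReal_pos hc00 hc0top)
    linarith
  -- n * q n → ∞
  have hnrd : Tendsto (fun n : ℕ => (n : ℝ) * r n ^ d) atTop atTop := by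
    apply tendsto_atTop_mono' atTop _ hrlog
    filter_upwards [eventually_ge_atTop 3] with n hn
    apply div_le_self (mul_nonneg (Nat.cast_nonneg n) (pow_nonneg (hr_pos n).le d))
    have h8 : (3:ℝ) ≤ (n:ℝ) := by exact_mod_cast hn
    rw [Real.le_log_iff_exp_le (by linarith)]
    calc Real.exp 1 ≤ 2.7182818286 := Real.exp_one_lt_d9.le
      _ ≤ 3 := by norm_num
      _ ≤ (n:ℝ) := h8
  have hnq : Tendsto (fun n : ℕ => (n : ℝ) * q n) atTop atTop := by
    have hc0pos : 0 < c0.toReal / 2 ^ d := by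
      have h7 : 0 < c0.toReal := ENNReal.toReal_pos hc00 hc0top
      positivity
    have base : Tendsto (fun n : ℕ => (n : ℝ) * r n ^ d * (c0.toReal / 2 ^ d)) atTop atTop :=
      hnrd.atTop_mul_const hc0pos
    apply tendsto_atTop_mono' atTop _ base
    filter_upwards [hqlb] with n hn
    have h9 : (r n / 2) ^ d * c0.toReal = r n ^ d * (c0.toReal / 2 ^ d) := by
      rw [div_pow]; ring
    calc (n : ℝ) * r n ^ d * (c0.toReal / 2 ^ d) = (n:ℝ) * ((r n / 2) ^ d * c0.toReal) := by
          rw [h9]; ring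
      _ ≤ (n:ℝ) * q n := mul_le_mul_of_nonneg_left hn (Nat.cast_nonneg n)
  -- Step 2 : ν (B n) ≈ h x * μ (B n)
  have hx_nonneg : 0 ≤ h x := (hrange x).1
  have hstep2 : ∀ ε : ℝ, 0 < ε → ∀ᶠ n in atTop,
      (h x - ε) * q n ≤ (ν (B n)).toReal ∧ (ν (B n)).toReal ≤ (h x + ε) * q n := by
    intro ε hε
    set L : ℝ≥0∞ := ENNReal.ofReal (h x) with hLdef
    set e : ℝ≥0∞ := ENNReal.ofReal ε with hedef
    have he0 : e ≠ 0 := by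
      rw [hedef]; simpa using hε
    have hIcc := hx1.eventually (ENNReal.Icc_mem_nhds ENNReal.ofReal_ne_top he0)
    have hcb : ∀ᶠ t in nhdsWithin (0:ℝ) (Set.Ioi 0),
        (L - e) * μ (closedBall x t) ≤ ν (closedBall x t) ∧
          ν (closedBall x t) ≤ (L + e) * μ (closedBall x t) := by
      filter_upwards [hIcc] with t ht
      by_cases hz : μ (closedBall x t) = 0
      · have hz2 : ν (closedBall x t) = 0 :=
          withDensity_absolutelyContinuous μ _ hz
        simp [hz, hz2]
      · have hcancel : ν (closedBall x t) / μ (closedBall x t) * μ (closedBall x t)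
            = ν (closedBall x t) := ENNReal.div_mul_cancel hz (measure_ne_top _ _)
        constructor
        · calc (L - e) * μ (closedBall x t)
              ≤ (ν (closedBall x t) / μ (closedBall x t)) * μ (closedBall x t) :=
                mul_le_mul_left ht.1 _
            _ = ν (closedBall x t) := hcancel
        · calc ν (closedBall x t)
              = (ν (closedBall x t) / μ (closedBall x t)) * μ (closedBall x t) := hcancel.symm
            _ ≤ (L + e) * μ (closedBall x t) := mul_le_mul_left ht.2 _
    obtain ⟨δ2, hδ2mem, hδ2⟩ := mem_nhdsGT_iff_exists_Ioc_subset.mp hcb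
    have hδ2pos : (0:ℝ) < δ2 := hδ2mem
    have hball : ∀ s : ℝ, 0 < s → s ≤ δ2 →
        (L - e) * μ (ball x s) ≤ ν (ball x s) ∧ ν (ball x s) ≤ (L + e) * μ (ball x s) := by
      intro s hs hsle
      constructor
      · apply mul_meas_ball_le ν μ x hs
        intro t ht hts
        exact (hδ2 ⟨ht, by linarith⟩).1
      · apply meas_ball_le_mul ν μ x hs
        intro t ht hts
        exact (hδ2 ⟨ht, by linarith⟩).2
    have hrle : ∀ᶠ n in atTop, r n ≤ δ2 := by
      filter_upwards [hr0.eventually (gt_mem_nhds hδ2pos)] with n hn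
      exact hn.le
    filter_upwards [hrle] with n hn
    obtain ⟨hlo, hhi⟩ := hball (r n) (hr_pos n) hn
    have hνfin' : ν (B n) ≠ ⊤ := measure_ne_top ν _
    constructor
    · have h10 : ((L - e) * μ (B n)).toReal ≤ (ν (B n)).toReal :=
        ENNReal.toReal_mono hνfin' hlo
      have h11 : ((L - e) * μ (B n)).toReal = max (h x - ε) 0 * q n := by
        rw [hLdef, hedef, ← ENNReal.ofReal_sub _ hε.le, ENNReal.toReal_mul,
          ENNReal.toReal_ofReal']
      calc (h x - ε) * q n ≤ max (h x - ε) 0 * q n :=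
            mul_le_mul_of_nonneg_right (le_max_left _ _) (hq_nonneg n)
        _ = ((L - e) * μ (B n)).toReal := h11.symm
        _ ≤ (ν (B n)).toReal := h10
    · have h12 : ((L + e) * μ (B n)).toReal = (h x + ε) * q n := by
        rw [hLdef, hedef, ← ENNReal.ofReal_add hx_nonneg hε.le, ENNReal.toReal_mul,
          ENNReal.toReal_ofReal (by linarith)]
      rw [← h12]
      exact ENNReal.toReal_mono
        (ENNReal.mul_ne_top (ENNReal.add_ne_top.mpr
          ⟨ENNReal.ofReal_ne_top, ENNReal.ofReal_ne_top⟩) (hμBfin n)) hhi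
  -- probabilistic machinery
  set Z : ℕ → ℕ → Ω → ℝ := fun n i ω =>
    (if X i ω ∈ B n ∧ Y i ω = 1 then (2:ℝ) else 0) - (if X i ω ∈ B n then 1 else 0) with hZdef
  set S : ℕ → Ω → ℝ := fun n ω => ∑ i ∈ Finset.range n, Z n i ω with hSdef
  set A : ℕ → Set Ω := fun n => {ω | ((Finset.range n).filter
      (fun i => X i ω ∈ ball x (r n) ∧ Y i ω = 1)).card * 2 >
      ((Finset.range n).filter (fun i => X i ω ∈ ball x (r n))).card} with hAdef
  have hcondmeas : ∀ n i, MeasurableSet {ω : Ω | X i ω ∈ B n ∧ Y i ω = 1} := by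
    intro n i
    have : {ω : Ω | X i ω ∈ B n ∧ Y i ω = 1}
        = (X i) ⁻¹' (B n) ∩ (Y i) ⁻¹' {1} := by
      ext ω
      simp [Set.mem_preimage, Set.mem_singleton_iff]
    rw [this]
    exact (hXmeas i (hBmeas n)).inter (hYmeas i (measurableSet_singleton 1))
  have hZmeas : ∀ n i, Measurable (Z n i) := by
    intro n i
    apply Measurable.sub
    · exact Measurable.ite (hcondmeas n i) measurable_const measurable_const
    · exact Measurable.ite (hXmeas i (hBmeas n)) measurable_const measurable_const
  have hZbd : ∀ n i ω, |Z n i ω| ≤ 1 := by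
    intro n i ω
    rw [hZdef]
    simp only
    split_ifs with h1 h2 h3
    · norm_num
    · exact absurd h1.1 h2
    · norm_num
    · norm_num
  have hZsq : ∀ n i ω, (Z n i ω) ^ 2 ≤ (if X i ω ∈ B n then (1:ℝ) else 0) := by
    intro n i ω
    rw [hZdef]
    simp only
    split_ifs with h1 h2 h3
    · norm_num
    · exact absurd h1.1 h2
    · norm_num
    · norm_num
  have hZmem : ∀ n i, MemLp (Z n i) 2 P := by
    intro n i
    apply MemLp.of_bound (hZmeas n i).aestronglyMeasurable 1
    exact Filter.Eventually.of_forall fun ω => by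
      rw [Real.norm_eq_abs]; exact hZbd n i ω
  have hZint : ∀ n i, Integrable (Z n i) P := fun n i =>
    integrable_of_abs_le (hZmeas n i).aestronglyMeasurable (hZbd n i)
  have hSmeas : ∀ n, Measurable (S n) := by
    intro n
    rw [hSdef]
    exact Finset.measurable_sum _ (fun i _ => hZmeas n i)
  have hAS : ∀ n, A n = {ω | 0 < S n ω} := by
    intro n
    rw [hAdef, hSdef]
    ext ω
    simp only [Set.mem_setOf_eq, gt_iff_lt, hZdef, hBdef]
    rw [Finset.sum_sub_distrib, ← Finset.sum_filter, ← Finset.sum_filter, Finset.sum_const,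
      Finset.sum_const, nsmul_eq_mul, nsmul_eq_mul, sub_pos, mul_one]
    norm_cast
  have hAmeas : ∀ n, MeasurableSet (A n) := by
    intro n
    rw [hAS n]
    exact measurableSet_lt measurable_const (hSmeas n)
  -- expectation of Z n i
  set νi : ℕ → Measure (EuclideanSpace ℝ (Fin d)) := fun i =>
    μ.withDensity (fun y => ENNReal.ofReal (η i y)) with hνidef
  have hP1 : ∀ n i, P {ω : Ω | X i ω ∈ B n ∧ Y i ω = 1} = νi i (B n) := by
    intro n i
    have hseteq : {ω : Ω | X i ω ∈ B n ∧ Y i ω = 1}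
        = {ω | Y i ω = 1} ∩ (X i) ⁻¹' (B n) := by
      ext ω
      simp [Set.mem_preimage, and_comm]
    rw [hseteq, hjoint i (B n) (hBmeas n), hνidef, withDensity_apply _ (hBmeas n)]
  have hP0 : ∀ n i, P ((X i) ⁻¹' (B n)) = μ (B n) := by
    intro n i
    rw [← hXlaw i, Measure.map_apply (hXmeas i) (hBmeas n)]
  have hEZ : ∀ n i, ∫ ω, Z n i ω ∂P = 2 * (νi i (B n)).toReal - q n := by
    intro n i
    have hrw : Z n i = fun ω =>
        Set.indicator {ω : Ω | X i ω ∈ B n ∧ Y i ω = 1} (fun _ => (2:ℝ)) ω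
          - Set.indicator ((X i) ⁻¹' (B n)) (fun _ => (1:ℝ)) ω := by
      funext ω
      rw [hZdef]
      simp only [Set.indicator_apply, Set.mem_setOf_eq, Set.mem_preimage]
    rw [hrw, integral_sub
      ((integrable_const (2:ℝ)).indicator (hcondmeas n i))
      ((integrable_const (1:ℝ)).indicator (hXmeas i (hBmeas n)))]
    rw [integral_indicator_const _ (hcondmeas n i),
      integral_indicator_const _ (hXmeas i (hBmeas n))]
    rw [measureReal_def, measureReal_def, hP1 n i, hP0 n i]
    simp [hqdef, mul_comm]
  have hvar : ∀ n i, variance (Z n i) P ≤ q n := by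
    intro n i
    refine le_trans (variance_le_expectation_sq (hZmeas n i).aestronglyMeasurable) ?_
    have hint1 : Integrable (fun ω => (Z n i ω) ^ 2) P := by
      apply integrable_of_abs_le ((hZmeas n i).pow_const 2).aestronglyMeasurable (C := 1)
      intro ω
      rw [abs_le]
      constructor
      · nlinarith [sq_nonneg (Z n i ω)]
      · nlinarith [hZbd n i ω, abs_nonneg (Z n i ω), sq_abs (Z n i ω),
          sq_nonneg (|Z n i ω| - 1)]
    have hint2 : Integrable (fun ω => if X i ω ∈ B n then (1:ℝ) else 0) P := by
      apply integrable_of_abs_le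
        (Measurable.ite (hXmeas i (hBmeas n)) measurable_const
           measurable_const).aestronglyMeasurable (C := 1)
      intro ω
      split_ifs <;> norm_num
    have hmono := integral_mono hint1 hint2 (fun ω => hZsq n i ω)
    have heq : ∫ ω, (if X i ω ∈ B n then (1:ℝ) else 0) ∂P = q n := by
      have hrw2 : (fun ω => if X i ω ∈ B n then (1:ℝ) else 0)
          = fun ω => Set.indicator ((X i) ⁻¹' (B n)) (fun _ => (1:ℝ)) ω := by
        funext ω
        simp only [Set.indicator_apply, Set.mem_preimage]
      rw [hrw2, integral_indicator_const _ (hXmeas i (hBmeas n)), measureReal_def, hP0 n i]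
      simp [hqdef]
    calc ∫ ω, ((Z n i) ^ 2) ω ∂P = ∫ ω, (Z n i ω) ^ 2 ∂P := by
          simp [Pi.pow_apply]
      _ ≤ ∫ ω, (if X i ω ∈ B n then (1:ℝ) else 0) ∂P := hmono
      _ = q n := heq
  have hZindep : ∀ n i j, i ≠ j → IndepFun (Z n i) (Z n j) P := by
    intro n i j hij
    set g : (EuclideanSpace ℝ (Fin d)) × ℝ → ℝ := fun pz =>
      (if pz.1 ∈ B n ∧ pz.2 = 1 then (2:ℝ) else 0) - (if pz.1 ∈ B n then 1 else 0) with hgdef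
    have hgmeas : Measurable g := by
      apply Measurable.sub
      · apply Measurable.ite _ measurable_const measurable_const
        have : {pz : (EuclideanSpace ℝ (Fin d)) × ℝ | pz.1 ∈ B n ∧ pz.2 = 1}
            = (Prod.fst ⁻¹' (B n)) ∩ (Prod.snd ⁻¹' {1}) := by
          ext pz
          simp [Set.mem_preimage, Set.mem_singleton_iff]
        rw [this]
        exact (measurable_fst (hBmeas n)).inter (measurable_snd (measurableSet_singleton 1))
      · exact Measurable.ite (measurable_fst (hBmeas n)) measurable_const measurable_const
    exact (hindep.indepFun hij).comp hgmeas hgmeas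
  have hSsum : ∀ n, S n = ∑ i ∈ Finset.range n, Z n i := by
    intro n
    funext ω
    rw [hSdef, Finset.sum_apply]
  have hSmem : ∀ n, MemLp (S n) 2 P := by
    intro n
    rw [hSsum n]
    exact memLp_finsetSum' _ (fun i _ => hZmem n i)
  have hSvar : ∀ n, variance (S n) P ≤ (n : ℝ) * q n := by
    intro n
    rw [hSsum n, IndepFun.variance_sum (fun i _ => hZmem n i)
      (fun i _ j _ hij => hZindep n i j hij)]
    calc ∑ i ∈ Finset.range n, variance (Z n i) P ≤ ∑ _i ∈ Finset.range n, q n :=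
          Finset.sum_le_sum (fun i _ => hvar n i)
      _ = (n : ℝ) * q n := by
          rw [Finset.sum_const, Finset.card_range, nsmul_eq_mul]
  set m : ℕ → ℝ := fun n => ∫ ω, S n ω ∂P with hmdef
  have hES : ∀ n, m n = 2 * (∑ i ∈ Finset.range n, (νi i (B n)).toReal) - n * q n := by
    intro n
    rw [hmdef]
    simp only
    rw [hSdef]
    simp only
    rw [integral_finset_sum _ (fun i _ => hZint n i)]
    rw [Finset.sum_congr rfl (fun i _ => hEZ n i), Finset.sum_sub_distrib,
      Finset.sum_const, Finset.card_range, ← Finset.mul_sum]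
    simp [nsmul_eq_mul]
  -- mean estimate
  set δ0 : ℝ := |2 * h x - 1| with hδ0def
  have hδ0pos : 0 < δ0 := by
    rw [hδ0def, abs_pos]
    intro hcon
    apply hne
    linarith
  set ε : ℝ := δ0 / 8 with hεdef
  have hεpos : 0 < ε := by rw [hεdef]; positivity
  -- I1 : Bochner integral identification and uniform convergence bound
  have hI1 : ∀ᶠ n in atTop,
      |(∑ i ∈ Finset.range n, (νi i (B n)).toReal) - (n : ℝ) * (ν (B n)).toReal|
        ≤ (n : ℝ) * ε * q n := by
    have huni : ∀ᶠ n : ℕ in atTop, ∀ y, dist (h y)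
        ((1 / (n : ℝ)) * ∑ i ∈ Finset.range n, η i y) < ε :=
      Metric.tendstoUniformly_iff.mp hconv ε hεpos
    filter_upwards [huni, eventually_ge_atTop 1] with n hn hn1
    have hνieq : ∀ i, (νi i (B n)).toReal = ∫ y in B n, η i y ∂μ := by
      intro i
      rw [hνidef]
      exact setIntegral_eq_withDensity_toReal μ (hηmeas i) (fun y => (hηrange i y).1) (hBmeas n)
    have hνeq : (ν (B n)).toReal = ∫ y in B n, h y ∂μ := by
      rw [hνdef]
      exact setIntegral_eq_withDensity_toReal μ hmeas (fun y => (hrange y).1) (hBmeas n)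
    have hinti : ∀ i, IntegrableOn (η i) (B n) μ := by
      intro i
      apply integrable_of_abs_le (hηmeas i).aestronglyMeasurable.restrict (C := 1)
      intro y
      rw [abs_le]
      exact ⟨by linarith [(hηrange i y).1], (hηrange i y).2⟩
    have hinth : IntegrableOn h (B n) μ := by
      apply integrable_of_abs_le hmeas.aestronglyMeasurable.restrict (C := 1)
      intro y
      rw [abs_le]
      exact ⟨by linarith [(hrange y).1], (hrange y).2⟩
    have hsum : (∑ i ∈ Finset.range n, (νi i (B n)).toReal)
        = ∫ y in B n, (∑ i ∈ Finset.range n, η i y) ∂μ := by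
      rw [Finset.sum_congr rfl (fun i _ => hνieq i),
        ← integral_finset_sum _ (fun i _ => hinti i)]
    have hnh : (n : ℝ) * (ν (B n)).toReal = ∫ y in B n, (n : ℝ) * h y ∂μ := by
      rw [hνeq, ← integral_const_mul]
    rw [hsum, hnh, ← integral_sub (integrable_finset_sum _ (fun i _ => hinti i))
      (hinth.const_mul _)]
    have hbound : ∀ y ∈ B n,
        ‖(∑ i ∈ Finset.range n, η i y) - (n : ℝ) * h y‖ ≤ (n : ℝ) * ε := by
      intro y _
      have hnne : (n : ℝ) ≠ 0 := by
        have : (1:ℝ) ≤ (n:ℝ) := by exact_mod_cast hn1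
        linarith
      have hdist := hn y
      rw [Real.dist_eq] at hdist
      have heq2 : (∑ i ∈ Finset.range n, η i y) - (n : ℝ) * h y
          = (n : ℝ) * ((1 / (n : ℝ)) * ∑ i ∈ Finset.range n, η i y - h y) := by
        field_simp
      rw [Real.norm_eq_abs, heq2, abs_mul, abs_of_nonneg (Nat.cast_nonneg n)]
      have : |1 / (n:ℝ) * ∑ i ∈ Finset.range n, η i y - h y| ≤ ε := by
        rw [abs_sub_comm]
        exact hdist.le
      exact mul_le_mul_of_nonneg_left this (Nat.cast_nonneg n)
    have := norm_setIntegral_le_of_norm_le_const (μ := μ) (s := B n)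
      (measure_lt_top μ _) hbound
    rw [Real.norm_eq_abs] at this
    calc |∫ y in B n, ((∑ i ∈ Finset.range n, η i y) - (n:ℝ) * h y) ∂μ|
        ≤ (n : ℝ) * ε * (μ (B n)).toReal := this
      _ = (n : ℝ) * ε * q n := by rw [hqdef]
  have hI2 : ∀ᶠ n in atTop, |(ν (B n)).toReal - h x * q n| ≤ ε * q n := by
    filter_upwards [hstep2 ε hεpos] with n hn
    rw [abs_le]
    constructor
    · have := hn.1
      nlinarith [hq_nonneg n]
    · have := hn.2
      nlinarith [hq_nonneg n]
  have hmean : ∀ᶠ n in atTop,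
      |m n - ((n:ℝ) * q n) * (2 * h x - 1)| ≤ ((n:ℝ) * q n) * (δ0 / 2) := by
    filter_upwards [hI1, hI2] with n h1n h2n
    rw [hES n]
    set a := ∑ i ∈ Finset.range n, (νi i (B n)).toReal
    set v := (ν (B n)).toReal
    have e1 : 2 * a - (n:ℝ) * q n - ((n:ℝ) * q n) * (2 * h x - 1)
        = 2 * ((a - (n:ℝ) * v) + (n:ℝ) * (v - h x * q n)) := by ring
    rw [e1, abs_mul, abs_of_nonneg (by norm_num : (0:ℝ) ≤ 2)]
    have e2 : |(a - (n:ℝ) * v) + (n:ℝ) * (v - h x * q n)|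
        ≤ (n:ℝ) * ε * q n + (n:ℝ) * (ε * q n) := by
      refine le_trans (abs_add_le _ _) ?_
      apply add_le_add h1n
      rw [abs_mul, abs_of_nonneg (Nat.cast_nonneg n)]
      exact mul_le_mul_of_nonneg_left h2n (Nat.cast_nonneg n)
    have e3 : 2 * ((n:ℝ) * ε * q n + (n:ℝ) * (ε * q n)) = ((n:ℝ) * q n) * (δ0 / 2) := by
      rw [hεdef]; ring
    calc (2:ℝ) * |(a - (n:ℝ) * v) + (n:ℝ) * (v - h x * q n)|
        ≤ 2 * ((n:ℝ) * ε * q n + (n:ℝ) * (ε * q n)) := by linarith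
      _ = ((n:ℝ) * q n) * (δ0 / 2) := e3
  -- Chebyshev deviation bound
  have hdev : ∀ᶠ n : ℕ in atTop,
      (P {ω | δ0 / 2 * ((n:ℝ) * q n) ≤ |S n ω - m n|}).toReal
        ≤ 4 / (δ0 ^ 2 * ((n:ℝ) * q n)) := by
    filter_upwards [hqpos, eventually_ge_atTop 1] with n hq0 hn1
    have hnpos : (0:ℝ) < (n:ℝ) := by exact_mod_cast hn1
    have hnqpos : 0 < (n:ℝ) * q n := mul_pos hnpos hq0
    have ht : 0 < δ0 / 2 * ((n:ℝ) * q n) := mul_pos (half_pos hδ0pos) hnqpos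
    have hchev := meas_ge_le_variance_div_sq (hSmem n) ht
    have hb1 : variance (S n) P / (δ0 / 2 * ((n:ℝ) * q n)) ^ 2
        ≤ ((n:ℝ) * q n) / (δ0 / 2 * ((n:ℝ) * q n)) ^ 2 := by
      exact (div_le_div_iff_of_pos_right (pow_pos ht 2)).mpr (hSvar n)
    have hb2 : ((n:ℝ) * q n) / (δ0 / 2 * ((n:ℝ) * q n)) ^ 2
        = 4 / (δ0 ^ 2 * ((n:ℝ) * q n)) := by
      field_simp
      ring
    apply ENNReal.toReal_le_of_le_ofReal (div_nonneg (by norm_num) (mul_nonneg (sq_nonneg δ0) hnqpos.le))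
    calc P {ω | δ0 / 2 * ((n:ℝ) * q n) ≤ |S n ω - m n|}
        ≤ ENNReal.ofReal (variance (S n) P / (δ0 / 2 * ((n:ℝ) * q n)) ^ 2) := hchev
      _ ≤ ENNReal.ofReal (4 / (δ0 ^ 2 * ((n:ℝ) * q n))) := by
          apply ENNReal.ofReal_le_ofReal
          rw [← hb2]
          exact hb1
  have hzero : Tendsto (fun n : ℕ => 4 / (δ0 ^ 2 * ((n:ℝ) * q n))) atTop (nhds 0) := by
    have hinv : Tendsto (fun n : ℕ => ((n:ℝ) * q n)⁻¹) atTop (nhds 0) :=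
      hnq.inv_tendsto_atTop
    have := hinv.const_mul (4 / δ0 ^ 2)
    rw [mul_zero] at this
    apply this.congr
    intro n
    rw [div_mul_eq_div_div]
    ring
  -- assemble
  have hcompl_eq : ∀ n, {ω : Ω | ¬ (((Finset.range n).filter
        (fun i => X i ω ∈ ball x (r n) ∧ Y i ω = 1)).card * 2 >
        ((Finset.range n).filter (fun i => X i ω ∈ ball x (r n))).card)} = (A n)ᶜ := by
    intro n
    rw [hAdef]
    rfl
  have hPcompl : ∀ n, (P ((A n)ᶜ)).toReal = 1 - (P (A n)).toReal := by
    intro n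
    rw [prob_compl_eq_one_sub (hAmeas n),
      ENNReal.toReal_sub_of_le prob_le_one ENNReal.one_ne_top, ENNReal.toReal_one]
  rcases hne.lt_or_gt with hlt | hgt
  · -- h x < 1/2
    have hδ0eq : 2 * h x - 1 = -δ0 := by
      rw [hδ0def, abs_of_neg (by linarith)]
      ring
    have hsub : ∀ᶠ n in atTop, A n ⊆ {ω | δ0 / 2 * ((n:ℝ) * q n) ≤ |S n ω - m n|} := by
      filter_upwards [hmean, hqpos, eventually_ge_atTop 1] with n hmn hq0 hn1
      intro ω hω
      rw [hAS n] at hω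
      have hω' : 0 < S n ω := hω
      have hnq0 : 0 ≤ (n:ℝ) * q n := by positivity
      rw [hδ0eq] at hmn
      rw [abs_le] at hmn
      have hm_le : m n ≤ -(δ0 / 2) * ((n:ℝ) * q n) := by nlinarith [hmn.2]
      rw [Set.mem_setOf_eq, le_abs]
      left
      nlinarith
    have key0 : Tendsto (fun n => (P (A n)).toReal) atTop (nhds 0) := by
      apply squeeze_zero' (Filter.Eventually.of_forall (fun n => ENNReal.toReal_nonneg))
        _ hzero
      filter_upwards [hsub, hdev] with n hs hd
      calc (P (A n)).toReal
          ≤ (P {ω | δ0 / 2 * ((n:ℝ) * q n) ≤ |S n ω - m n|}).toReal := by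
            apply ENNReal.toReal_mono (measure_ne_top P _) (measure_mono hs)
        _ ≤ 4 / (δ0 ^ 2 * ((n:ℝ) * q n)) := hd
    constructor
    · rw [if_pos hlt]
      have : Tendsto (fun n => 1 - (P (A n)).toReal) atTop (nhds (1 - 0)) :=
        (tendsto_const_nhds).sub key0
      rw [sub_zero] at this
      apply this.congr
      intro n
      rw [← hPcompl n, hcompl_eq n]
    · rw [if_neg (by linarith : ¬ (1/2 < h x))]
      exact key0
  · -- h x > 1/2
    have hδ0eq : 2 * h x - 1 = δ0 := by
      rw [hδ0def, abs_of_pos (by linarith)]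
    have hsub : ∀ᶠ n in atTop, (A n)ᶜ ⊆ {ω | δ0 / 2 * ((n:ℝ) * q n) ≤ |S n ω - m n|} := by
      filter_upwards [hmean, hqpos, eventually_ge_atTop 1] with n hmn hq0 hn1
      intro ω hω
      rw [hAS n] at hω
      have hω' : S n ω ≤ 0 := not_lt.mp hω
      have hnq0 : 0 ≤ (n:ℝ) * q n := by positivity
      rw [hδ0eq, abs_le] at hmn
      have hm_ge : δ0 / 2 * ((n:ℝ) * q n) ≤ m n := by nlinarith [hmn.1]
      rw [Set.mem_setOf_eq, le_abs]
      right
      nlinarith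
    have key0 : Tendsto (fun n => (P ((A n)ᶜ)).toReal) atTop (nhds 0) := by
      apply squeeze_zero' (Filter.Eventually.of_forall (fun n => ENNReal.toReal_nonneg))
        _ hzero
      filter_upwards [hsub, hdev] with n hs hd
      calc (P ((A n)ᶜ)).toReal
          ≤ (P {ω | δ0 / 2 * ((n:ℝ) * q n) ≤ |S n ω - m n|}).toReal := by
            apply ENNReal.toReal_mono (measure_ne_top P _) (measure_mono hs)
        _ ≤ 4 / (δ0 ^ 2 * ((n:ℝ) * q n)) := hd
    constructor
    · rw [if_neg (by linarith : ¬ (h x < 1/2))]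
      apply key0.congr
      intro n
      rw [hcompl_eq n]
    · rw [if_pos (by linarith : 1/2 < h x)]
      have : Tendsto (fun n => 1 - (P ((A n)ᶜ)).toReal) atTop (nhds (1 - 0)) :=
        (tendsto_const_nhds).sub key0
      rw [sub_zero] at this
      apply this.congr
      intro n
      rw [hPcompl n]
      ring
  done
end
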